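/- arXiv:2210.11648 — 5 statements merged into one kernel-verified Lean document; each statement's English description precedes it below -/
import Mathlib

section
/- Fix two differentiable, strictly increasing, strictly convex functions ĝ, g: ℝ → ℝ. If x* is an optimal solution of the convex program P^{ĝ}, i.e., x* minimizes Σ_{j∈S} (1/w_j)·ĝ(w_j·(1 − Σ_i x_{ij})) over all fractional matchings of G[D1,S], then x* is also an optimal solution of the convex program P^{g}, i.e., x* minimizes Σ_{j∈S} (1/w_j)·g(w_j·(1 − Σ_i x_{ij})) over all fractional matchings of G[D1,S]. In other words, the optimal solution of P^g does not depend on the choice of the convex function g. -/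
open scoped BigOperators

/-- A fractional matching of `G[D1, S]`. -/
def IsFracMatching {D S : Type*} (Ed : Finset (D × S)) (D1 : Finset D) (Ssup : Finset S)
    (x : D → S → ℝ) : Prop :=
  (∀ i j, 0 ≤ x i j) ∧ (∀ i j, (i, j) ∉ Ed → x i j = 0) ∧
    (∀ i ∈ D1, ∑ j ∈ Ssup, x i j ≤ 1) ∧ ∀ j ∈ Ssup, ∑ i ∈ D1, x i j ≤ 1

/-- The objective of the convex program `P^g`. -/
noncomputable def PgObj {D S : Type*} (g : ℝ → ℝ) (w : S → ℝ) (D1 : Finset D)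
    (Ssup : Finset S) (x : D → S → ℝ) : ℝ :=
  ∑ j ∈ Ssup, (1 / w j) * g (w j * (1 - ∑ i ∈ D1, x i j))


lemma my_deriv_pos {f : ℝ → ℝ} (hd : Differentiable ℝ f) (hm : StrictMono f)
    (hc : StrictConvexOn ℝ Set.univ f) (t : ℝ) : 0 < deriv f t := by
  have h := hc.convexOn.slope_le_deriv (Set.mem_univ (t-1)) (Set.mem_univ t)
    (by linarith) (hd t)
  have hft : f (t-1) < f t := hm (by linarith)
  rw [slope_def_field] at h
  have ht : t - (t-1) = 1 := by ring
  rw [ht, div_one] at h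
  linarith

lemma my_deriv_strictMono {f : ℝ → ℝ} (hd : Differentiable ℝ f)
    (hc : StrictConvexOn ℝ Set.univ f) : StrictMono (deriv f) := by
  intro a b hab
  exact hc.strictMonoOn_deriv (fun x _ => hd x) (Set.mem_univ a) (Set.mem_univ b) hab

lemma my_grad_ineq {f : ℝ → ℝ} (hd : Differentiable ℝ f) (hc : ConvexOn ℝ Set.univ f)
    (a b : ℝ) : f a + deriv f a * (b - a) ≤ f b := by
  rcases lt_trichotomy a b with h | h | h
  · have h1 := hc.deriv_le_slope (Set.mem_univ a) (Set.mem_univ b) h (hd a)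
    rw [slope_def_field] at h1
    have hb : (0:ℝ) < b - a := by linarith
    nlinarith [(le_div_iff₀ hb).1 h1]
  · simp [h]
  · have h1 := hc.slope_le_deriv (Set.mem_univ b) (Set.mem_univ a) h (hd a)
    rw [slope_def_field] at h1
    have hb : (0:ℝ) < a - b := by linarith
    nlinarith [(div_le_iff₀ hb).1 h1]

lemma my_first_order {F : ℝ → ℝ} {c : ℝ} (hF : HasDerivAt F c 0)
    (hmin : ∀ t ∈ Set.Icc (0:ℝ) 1, F 0 ≤ F t) : 0 ≤ c := by
  have h := hasDerivAt_iff_tendsto_slope.mp hF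
  have h2 : Filter.Tendsto (slope F 0) (nhdsWithin 0 (Set.Ioi 0)) (nhds c) :=
    h.mono_left (nhdsWithin_mono _ (fun x hx => ne_of_gt hx))
  refine ge_of_tendsto h2 ?_
  filter_upwards [Ioo_mem_nhdsGT_of_mem (Set.mem_Ico.mpr ⟨le_refl (0:ℝ), one_pos⟩)] with t ht
  rw [slope_def_field]
  have h0 : F 0 ≤ F t := hmin t ⟨ht.1.le, ht.2.le⟩
  have hpos : (0:ℝ) < t - 0 := by simpa using ht.1
  apply div_nonneg <;> linarith

section Comb
variable {D S : Type*} [DecidableEq D] [DecidableEq S]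

/-- column sum over first-stage demands -/
def csum (D1 : Finset D) (x : D → S → ℝ) (j : S) : ℝ := ∑ i ∈ D1, x i j

/-- row sum over supplies -/
def rsum (Ssup : Finset S) (x : D → S → ℝ) (i : D) : ℝ := ∑ j ∈ Ssup, x i j

/-- grid-supported fractional matching -/
def GFeas (grid : Finset (D × S)) (D1 : Finset D) (Ssup : Finset S) (x : D → S → ℝ) : Prop :=
  (∀ i j, 0 ≤ x i j) ∧ (∀ i j, (i, j) ∉ grid → x i j = 0) ∧
    (∀ i ∈ D1, rsum Ssup x i ≤ 1) ∧ ∀ j ∈ Ssup, csum D1 x j ≤ 1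

/-- alternating-walk reachability -/
inductive Reach (D1 : Finset D) (Ssup : Finset S) (x y : D → S → ℝ) (j0 : S) : D ⊕ S → Prop
  | base : Reach D1 Ssup x y j0 (Sum.inr j0)
  | toRow {j i} : Reach D1 Ssup x y j0 (Sum.inr j) → i ∈ D1 → j ∈ Ssup →
      x i j < y i j → Reach D1 Ssup x y j0 (Sum.inl i)
  | toCol {i j} : Reach D1 Ssup x y j0 (Sum.inl i) → i ∈ D1 → j ∈ Ssup →
      y i j < x i j → Reach D1 Ssup x y j0 (Sum.inr j)

lemma Reach.inr_mem {D1 : Finset D} {Ssup : Finset S} {x y : D → S → ℝ} {j0 : S}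
    (hj0 : j0 ∈ Ssup) {j : S} (h : Reach D1 Ssup x y j0 (Sum.inr j)) : j ∈ Ssup := by
  cases h with
  | base => exact hj0
  | toCol _ _ hj _ => exact hj

lemma Reach.inl_mem {D1 : Finset D} {Ssup : Finset S} {x y : D → S → ℝ} {j0 : S}
    {i : D} (h : Reach D1 Ssup x y j0 (Sum.inl i)) : i ∈ D1 := by
  cases h with
  | toRow _ hi _ _ => exact hi

/-- the walk direction lemma -/
lemma walk_exists {grid : Finset (D × S)} {D1 : Finset D} {Ssup : Finset S}
    {x y : D → S → ℝ}
    (hx0 : ∀ i j, 0 ≤ x i j) (hy0 : ∀ i j, 0 ≤ y i j)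
    (hxg : ∀ i j, (i, j) ∉ grid → x i j = 0) (hyg : ∀ i j, (i, j) ∉ grid → y i j = 0)
    {j0 : S} {v : D ⊕ S} (hv : Reach D1 Ssup x y j0 v) :
    ∃ d : D → S → ℝ,
      (∀ i j, d i j ≠ 0 → (i, j) ∈ grid) ∧
      (∀ i j, d i j < 0 → y i j < x i j) ∧
      (∀ i, rsum Ssup d i = Sum.elim (fun i0 => if i = i0 then (1:ℝ) else 0) (fun _ => 0) v) ∧
      (∀ c, csum D1 d c =
        (if c = j0 then (1:ℝ) else 0) - Sum.elim (fun _ => 0) (fun k => if c = k then (1:ℝ) else 0) v) := by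
  induction hv with
  | base =>
      refine ⟨fun _ _ => 0, by simp, by simp, by simp [rsum], by simp [csum]⟩
  | @toRow j i hr hi hj hxy ih =>
      obtain ⟨d, hdg, hdneg, hdr, hdc⟩ := ih
      refine ⟨fun a b => d a b + (if a = i then (if b = j then (1:ℝ) else 0) else 0), ?_, ?_, ?_, ?_⟩
      · intro a b hab
        dsimp only at hab
        by_cases hgab : (a, b) ∈ grid
        · exact hgab
        · exfalso
          have hd0 : d a b = 0 := by
            by_contra h0; exact hgab (hdg a b h0)
          rw [hd0, zero_add] at hab
          by_cases ha : a = i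
          · by_cases hb : b = j
            · subst ha; subst hb
              have : y a b ≠ 0 := by
                have := hx0 a b; intro h'; rw [h'] at hxy; linarith
              exact this (hyg a b hgab)
            · simp [ha, hb] at hab
          · simp [ha] at hab
      · intro a b hab
        dsimp only at hab
        refine hdneg a b ?_
        by_cases ha : a = i
        · by_cases hb : b = j
          · subst ha; subst hb; simp at hab; linarith
          · simpa [ha, hb] using hab
        · simpa [ha] using hab
      · intro a
        have : rsum Ssup (fun a b => d a b + (if a = i then (if b = j then (1:ℝ) else 0) else 0)) a
            = rsum Ssup d a + (if a = i then (1:ℝ) else 0) := by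
          unfold rsum
          rw [Finset.sum_add_distrib]
          congr 1
          by_cases ha : a = i
          · simp [ha, Finset.sum_ite_eq', hj]
          · simp [ha]
        rw [this, hdr a]
        simp
      · intro c
        have : csum D1 (fun a b => d a b + (if a = i then (if b = j then (1:ℝ) else 0) else 0)) c
            = csum D1 d c + (if c = j then (1:ℝ) else 0) := by
          unfold csum
          rw [Finset.sum_add_distrib]
          congr 1
          by_cases hc : c = j
          · simp [hc, Finset.sum_ite_eq', hi]
          · simp [hc]
        rw [this, hdc c]
        simp
  | @toCol i j hr hi hj hxy ih =>
      obtain ⟨d, hdg, hdneg, hdr, hdc⟩ := ih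
      refine ⟨fun a b => d a b - (if a = i then (if b = j then (1:ℝ) else 0) else 0), ?_, ?_, ?_, ?_⟩
      · intro a b hab
        dsimp only at hab
        by_cases hgab : (a, b) ∈ grid
        · exact hgab
        · exfalso
          have hd0 : d a b = 0 := by
            by_contra h0; exact hgab (hdg a b h0)
          rw [hd0, zero_sub, neg_ne_zero] at hab
          by_cases ha : a = i
          · by_cases hb : b = j
            · subst ha; subst hb
              have : x a b ≠ 0 := by
                have := hy0 a b; intro h'; rw [h'] at hxy; linarith
              exact this (hxg a b hgab)
            · simp [ha, hb] at hab
          · simp [ha] at hab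
      · intro a b hab
        dsimp only at hab
        by_cases ha : a = i
        · by_cases hb : b = j
          · subst ha; subst hb; exact hxy
          · exact hdneg a b (by simpa [ha, hb] using hab)
        · exact hdneg a b (by simpa [ha] using hab)
      · intro a
        have : rsum Ssup (fun a b => d a b - (if a = i then (if b = j then (1:ℝ) else 0) else 0)) a
            = rsum Ssup d a - (if a = i then (1:ℝ) else 0) := by
          unfold rsum
          rw [Finset.sum_sub_distrib]
          congr 1
          by_cases ha : a = i
          · simp [ha, Finset.sum_ite_eq', hj]
          · simp [ha]
        rw [this, hdr a]
        simp
      · intro c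
        have : csum D1 (fun a b => d a b - (if a = i then (if b = j then (1:ℝ) else 0) else 0)) c
            = csum D1 d c - (if c = j then (1:ℝ) else 0) := by
          unfold csum
          rw [Finset.sum_sub_distrib]
          congr 1
          by_cases hc : c = j
          · simp [hc, Finset.sum_ite_eq', hi]
          · simp [hc]
        rw [this, hdc c]
        simp

lemma entry_bound {x d : D → S → ℝ} (grid : Finset (D × S))
    (hdg : ∀ i j, d i j ≠ 0 → (i, j) ∈ grid)
    (hpos : ∀ i j, d i j < 0 → 0 < x i j) :
    ∃ ε0 : ℝ, 0 < ε0 ∧ ∀ i j, d i j < 0 → ε0 * (-d i j) ≤ x i j := by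
  classical
  set P := grid.filter (fun e => d e.1 e.2 < 0) with hP
  by_cases hPne : P.Nonempty
  · refine ⟨P.inf' hPne (fun e => x e.1 e.2 / (-d e.1 e.2)), ?_, ?_⟩
    · rw [Finset.lt_inf'_iff]
      intro e he
      rw [hP, Finset.mem_filter] at he
      exact div_pos (hpos e.1 e.2 he.2) (by linarith [he.2])
    · intro i j hij
      have hmem : (i, j) ∈ P := by
        rw [hP, Finset.mem_filter]
        exact ⟨hdg i j (ne_of_lt hij), hij⟩
      have hle := Finset.inf'_le (fun e => x e.1 e.2 / (-d e.1 e.2)) hmem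
      have hd : (0:ℝ) < -d i j := by linarith
      calc P.inf' hPne (fun e => x e.1 e.2 / (-d e.1 e.2)) * (-d i j)
          ≤ (x i j / (-d i j)) * (-d i j) := by
            exact mul_le_mul_of_nonneg_right hle hd.le
        _ = x i j := div_mul_cancel₀ _ (ne_of_gt hd)
  · refine ⟨1, one_pos, fun i j hij => absurd ?_ hPne⟩
    exact ⟨(i, j), by rw [hP, Finset.mem_filter]; exact ⟨hdg i j (ne_of_lt hij), hij⟩⟩

/-- the key exchange lemma -/
lemma exchange {grid : Finset (D × S)} {D1 : Finset D} {Ssup : Finset S}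
    (hgrid : ∀ e ∈ grid, e.1 ∈ D1 ∧ e.2 ∈ Ssup)
    {x y : D → S → ℝ} (hx : GFeas grid D1 Ssup x) (hy : GFeas grid D1 Ssup y)
    {j0 : S} (hj0 : j0 ∈ Ssup) (hlt : csum D1 x j0 < csum D1 y j0)
    {η : ℝ} (hη : 0 < η) :
    (∃ ε, 0 < ε ∧ ε ≤ η ∧ ∃ x', GFeas grid D1 Ssup x' ∧
        ∀ c, csum D1 x' c = csum D1 x c + (if c = j0 then ε else 0))
    ∨ (∃ k ∈ Ssup, csum D1 y k < csum D1 x k ∧ ∃ ε, 0 < ε ∧ ε ≤ η ∧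
        ∃ x', GFeas grid D1 Ssup x' ∧
        ∀ c, csum D1 x' c = csum D1 x c + (if c = j0 then ε else 0) - (if c = k then ε else 0)) := by
  classical
  obtain ⟨hx0, hxg, hxr, hxc⟩ := hx
  obtain ⟨hy0, hyg, hyr, hyc⟩ := hy
  have hgap : 0 < csum D1 y j0 - csum D1 x j0 := by linarith
  by_cases hB : ∃ k, Reach D1 Ssup x y j0 (Sum.inr k) ∧ csum D1 y k < csum D1 x k
  · right
    obtain ⟨k, hkR, hklt⟩ := hB
    have hkS : k ∈ Ssup := hkR.inr_mem hj0
    obtain ⟨d, hdg, hdneg, hdr, hdc⟩ := walk_exists hx0 hy0 hxg hyg hkR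
    have hdneg' : ∀ i j, d i j < 0 → 0 < x i j := fun i j h =>
      lt_of_le_of_lt (hy0 i j) (hdneg i j h)
    obtain ⟨ε0, hε0, hεsmall⟩ := entry_bound grid hdg hdneg'
    set ε := min (min η ε0) (csum D1 y j0 - csum D1 x j0) with hεdef
    have hεpos : 0 < ε := lt_min (lt_min hη hε0) hgap
    have hεη : ε ≤ η := le_trans (min_le_left _ _) (min_le_left _ _)
    have hεe : ε ≤ ε0 := le_trans (min_le_left _ _) (min_le_right _ _)
    have hεg : ε ≤ csum D1 y j0 - csum D1 x j0 := min_le_right _ _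
    set x' : D → S → ℝ := fun a b => x a b + ε * d a b with hx'def
    have hkj0 : k ≠ j0 := fun h => by rw [h] at hklt; linarith
    have hcs : ∀ c, csum D1 x' c = csum D1 x c + ε * csum D1 d c := by
      intro c
      unfold csum
      rw [Finset.sum_add_distrib, Finset.mul_sum]
    have hrs : ∀ i, rsum Ssup x' i = rsum Ssup x i + ε * rsum Ssup d i := by
      intro i
      unfold rsum
      rw [Finset.sum_add_distrib, Finset.mul_sum]
    refine ⟨k, hkS, hklt, ε, hεpos, hεη, x', ⟨?_, ?_, ?_, ?_⟩, ?_⟩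
    · intro i j
      rcases lt_trichotomy (d i j) 0 with h | h | h
      · have := hεsmall i j h
        have h2 : ε * (-d i j) ≤ ε0 * (-d i j) :=
          mul_le_mul_of_nonneg_right hεe (by linarith)
        have := hεsmall i j h
        simp only [hx'def]
        nlinarith
      · simp [hx'def, h, hx0 i j]
      · have : 0 ≤ ε * d i j := le_of_lt (mul_pos hεpos h)
        simp only [hx'def]
        linarith [hx0 i j]
    · intro i j hij
      have h1 : x i j = 0 := hxg i j hij
      have h2 : d i j = 0 := by
        by_contra h0; exact hij (hdg i j h0)
      simp [hx'def, h1, h2]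
    · intro i hi
      rw [hrs i, hdr i]
      simp only [Sum.elim_inr]
      rw [mul_zero, add_zero]
      exact hxr i hi
    · intro j hj
      rw [hcs j, hdc j]
      simp only [Sum.elim_inr]
      by_cases hc : j = j0
      · rw [if_pos hc, if_neg (by rw [hc]; exact fun h => hkj0 h.symm)]
        rw [hc]
        have : csum D1 y j0 ≤ 1 := hyc j0 hj0
        nlinarith
      · rw [if_neg hc]
        by_cases hck : j = k
        · have h1 := hxc j hj
          have h2 : 0 ≤ ε * (if j = k then (1:ℝ) else 0) := by
            rw [if_pos hck, mul_one]; linarith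
          nlinarith
        · rw [if_neg hck]
          rw [mul_sub, mul_zero]
          simp only [sub_zero, mul_zero, zero_sub]
          have := hxc j hj
          linarith
    · intro c
      rw [hcs c, hdc c]
      simp only [Sum.elim_inr]
      rw [mul_sub, mul_ite, mul_one, mul_zero, mul_ite, mul_one, mul_zero]
      ring
  · by_cases hA : ∃ i, Reach D1 Ssup x y j0 (Sum.inl i) ∧ rsum Ssup x i < 1
    · left
      obtain ⟨i0, hiR, hilt⟩ := hA
      have hi0 : i0 ∈ D1 := hiR.inl_mem
      obtain ⟨d, hdg, hdneg, hdr, hdc⟩ := walk_exists hx0 hy0 hxg hyg hiR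
      have hdneg' : ∀ i j, d i j < 0 → 0 < x i j := fun i j h =>
        lt_of_le_of_lt (hy0 i j) (hdneg i j h)
      obtain ⟨ε0, hε0, hεsmall⟩ := entry_bound grid hdg hdneg'
      set ε := min (min η ε0) (min (csum D1 y j0 - csum D1 x j0) (1 - rsum Ssup x i0)) with hεdef
      have hεpos : 0 < ε := lt_min (lt_min hη hε0) (lt_min hgap (by linarith))
      have hεη : ε ≤ η := le_trans (min_le_left _ _) (min_le_left _ _)
      have hεe : ε ≤ ε0 := le_trans (min_le_left _ _) (min_le_right _ _)
      have hεg : ε ≤ csum D1 y j0 - csum D1 x j0 :=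
        le_trans (min_le_right _ _) (min_le_left _ _)
      have hεr : ε ≤ 1 - rsum Ssup x i0 := le_trans (min_le_right _ _) (min_le_right _ _)
      set x' : D → S → ℝ := fun a b => x a b + ε * d a b with hx'def
      have hcs : ∀ c, csum D1 x' c = csum D1 x c + ε * csum D1 d c := by
        intro c
        unfold csum
        rw [Finset.sum_add_distrib, Finset.mul_sum]
      have hrs : ∀ i, rsum Ssup x' i = rsum Ssup x i + ε * rsum Ssup d i := by
        intro i
        unfold rsum
        rw [Finset.sum_add_distrib, Finset.mul_sum]
      refine ⟨ε, hεpos, hεη, x', ⟨?_, ?_, ?_, ?_⟩, ?_⟩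
      · intro i j
        rcases lt_trichotomy (d i j) 0 with h | h | h
        · have := hεsmall i j h
          have h2 : ε * (-d i j) ≤ ε0 * (-d i j) :=
            mul_le_mul_of_nonneg_right hεe (by linarith)
          simp only [hx'def]
          nlinarith
        · simp [hx'def, h, hx0 i j]
        · have : 0 ≤ ε * d i j := le_of_lt (mul_pos hεpos h)
          simp only [hx'def]
          linarith [hx0 i j]
      · intro i j hij
        have h1 : x i j = 0 := hxg i j hij
        have h2 : d i j = 0 := by
          by_contra h0; exact hij (hdg i j h0)
        simp [hx'def, h1, h2]
      · intro i hi
        rw [hrs i, hdr i]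
        simp only [Sum.elim_inl]
        by_cases hii : i = i0
        · rw [if_pos hii, mul_one, hii]
          linarith
        · rw [if_neg hii, mul_zero, add_zero]
          exact hxr i hi
      · intro j hj
        rw [hcs j, hdc j]
        simp only [Sum.elim_inl, sub_zero]
        by_cases hc : j = j0
        · rw [if_pos hc, mul_one, hc]
          have : csum D1 y j0 ≤ 1 := hyc j0 hj0
          linarith
        · rw [if_neg hc, mul_zero, add_zero]
          exact hxc j hj
      · intro c
        rw [hcs c, hdc c]
        simp only [Sum.elim_inl, sub_zero]
        rw [mul_ite, mul_one, mul_zero]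
    · exfalso
      push_neg at hA hB
      set Cch := Ssup.filter (fun j => Reach D1 Ssup x y j0 (Sum.inr j)) with hCch
      have hj0C : j0 ∈ Cch := Finset.mem_filter.2 ⟨hj0, Reach.base⟩
      have hpos : (0:ℝ) < ∑ j ∈ Cch, (csum D1 y j - csum D1 x j) := by
        apply Finset.sum_pos' (fun j hj => ?_) ⟨j0, hj0C, by linarith⟩
        rw [hCch, Finset.mem_filter] at hj
        linarith [hB j hj.2]
      have heq : ∑ j ∈ Cch, (csum D1 y j - csum D1 x j)
          = ∑ i ∈ D1, ∑ j ∈ Cch, (y i j - x i j) := by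
        rw [Finset.sum_comm]
        apply Finset.sum_congr rfl
        intro j _
        unfold csum
        rw [Finset.sum_sub_distrib]
      have hnonpos : ∑ i ∈ D1, ∑ j ∈ Cch, (y i j - x i j) ≤ 0 := by
        apply Finset.sum_nonpos
        intro i hi
        by_cases hrch : Reach D1 Ssup x y j0 (Sum.inl i)
        · have hsub : ∑ j ∈ Cch, (y i j - x i j) ≤ ∑ j ∈ Ssup, (y i j - x i j) := by
            apply Finset.sum_le_sum_of_subset_of_nonneg (Finset.filter_subset _ _)
            intro j hjS hjC
            rw [Finset.mem_filter] at hjC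
            push_neg at hjC
            by_contra hneg
            push_neg at hneg
            exact hjC hjS (Reach.toCol hrch hi hjS (by linarith))
          have : ∑ j ∈ Ssup, (y i j - x i j) = rsum Ssup y i - rsum Ssup x i := by
            unfold rsum; rw [Finset.sum_sub_distrib]
          have hxr1 : rsum Ssup x i = 1 := le_antisymm (hxr i hi) (hA i hrch)
          linarith [hyr i hi, hsub, this.le, this.ge]
        · apply Finset.sum_nonpos
          intro j hj
          rw [Finset.mem_filter] at hj
          by_contra hneg
          push_neg at hneg
          exact hrch (Reach.toRow hj.2 hi hj.1 (by linarith))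
      linarith [heq ▸ hpos]

lemma gfeas_isCompact {grid : Finset (D × S)} {D1 : Finset D} {Ssup : Finset S}
    (hgrid : ∀ e ∈ grid, e.1 ∈ D1 ∧ e.2 ∈ Ssup) :
    IsCompact {x : D → S → ℝ | GFeas grid D1 Ssup x} := by
  classical
  have hev : ∀ (i : D) (j : S), Continuous (fun x : D → S → ℝ => x i j) :=
    fun i j => (continuous_apply j).comp (continuous_apply i)
  have hbox : IsCompact (Set.pi Set.univ (fun i : D => Set.pi Set.univ (fun j : S =>
      if (i, j) ∈ grid then Set.Icc (0:ℝ) 1 else {0}))) :=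
    isCompact_univ_pi fun i => isCompact_univ_pi fun j => by
      split_ifs
      exacts [isCompact_Icc, isCompact_singleton]
  refine IsCompact.of_isClosed_subset hbox ?_ ?_
  · have hrw : {x : D → S → ℝ | GFeas grid D1 Ssup x} =
        (⋂ (i : D), ⋂ (j : S), {x : D → S → ℝ | 0 ≤ x i j}) ∩
        ((⋂ (i : D), ⋂ (j : S), {x : D → S → ℝ | (i, j) ∉ grid → x i j = 0}) ∩
        ((⋂ (i : D), {x : D → S → ℝ | i ∈ D1 → rsum Ssup x i ≤ 1}) ∩
        (⋂ (j : S), {x : D → S → ℝ | j ∈ Ssup → csum D1 x j ≤ 1}))) := by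
      ext z
      simp only [Set.mem_setOf_eq, Set.mem_inter_iff, Set.mem_iInter, GFeas]
    rw [hrw]
    refine IsClosed.inter ?_ (IsClosed.inter ?_ (IsClosed.inter ?_ ?_))
    · exact isClosed_iInter fun i => isClosed_iInter fun j =>
        isClosed_le continuous_const (hev i j)
    · refine isClosed_iInter fun i => isClosed_iInter fun j => ?_
      by_cases hm : (i, j) ∈ grid
      · have : {x : D → S → ℝ | (i, j) ∉ grid → x i j = 0} = Set.univ := by
          ext z; simp [hm]
        rw [this]; exact isClosed_univ
      · have : {x : D → S → ℝ | (i, j) ∉ grid → x i j = 0} = {x : D → S → ℝ | x i j = 0} := by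
          ext z; simp [hm]
        rw [this]; exact isClosed_eq (hev i j) continuous_const
    · refine isClosed_iInter fun i => ?_
      by_cases hm : i ∈ D1
      · have : {x : D → S → ℝ | i ∈ D1 → rsum Ssup x i ≤ 1} =
            {x : D → S → ℝ | rsum Ssup x i ≤ 1} := by ext z; simp [hm]
        rw [this]
        exact isClosed_le (by unfold rsum; exact continuous_finset_sum _ fun j _ => hev i j)
          continuous_const
      · have : {x : D → S → ℝ | i ∈ D1 → rsum Ssup x i ≤ 1} = Set.univ := by ext z; simp [hm]
        rw [this]; exact isClosed_univ
    · refine isClosed_iInter fun j => ?_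
      by_cases hm : j ∈ Ssup
      · have : {x : D → S → ℝ | j ∈ Ssup → csum D1 x j ≤ 1} =
            {x : D → S → ℝ | csum D1 x j ≤ 1} := by ext z; simp [hm]
        rw [this]
        exact isClosed_le (by unfold csum; exact continuous_finset_sum _ fun i _ => hev i j)
          continuous_const
      · have : {x : D → S → ℝ | j ∈ Ssup → csum D1 x j ≤ 1} = Set.univ := by ext z; simp [hm]
        rw [this]; exact isClosed_univ
  · intro z hz
    obtain ⟨hz0, hzg, hzr, hzc⟩ := hz
    intro i _
    intro j _
    dsimp only
    by_cases hm : (i, j) ∈ grid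
    · rw [if_pos hm]
      refine ⟨hz0 i j, ?_⟩
      have h1 : z i j ≤ csum D1 z j := by
        unfold csum
        exact Finset.single_le_sum (fun i' _ => hz0 i' j) (hgrid (i, j) hm).1
      exact le_trans h1 (hzc j (hgrid (i, j) hm).2)
    · rw [if_neg hm]
      exact hzg i j hm

end Comb
/-- first-order optimality condition -/
lemma first_order_opt {D S : Type*} [DecidableEq D] [DecidableEq S]
    (D1 : Finset D) (Ssup : Finset S) (Ed : Finset (D × S)) (w : S → ℝ)
    (hw : ∀ j ∈ Ssup, 0 < w j) (ghat : ℝ → ℝ) (hd : Differentiable ℝ ghat)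
    (xs : D → S → ℝ) (hxs : IsFracMatching Ed D1 Ssup xs)
    (hopt : ∀ x, IsFracMatching Ed D1 Ssup x →
      PgObj ghat w D1 Ssup xs ≤ PgObj ghat w D1 Ssup x)
    (x : D → S → ℝ) (hx : IsFracMatching Ed D1 Ssup x) :
    ∑ j ∈ Ssup, deriv ghat (w j * (1 - csum D1 xs j)) * csum D1 x j ≤
      ∑ j ∈ Ssup, deriv ghat (w j * (1 - csum D1 xs j)) * csum D1 xs j := by
  classical
  set δ : S → ℝ := fun j => csum D1 x j - csum D1 xs j with hδ
  set F : ℝ → ℝ :=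
    fun t => ∑ j ∈ Ssup, (1 / w j) * ghat (w j * (1 - (csum D1 xs j + t * δ j))) with hF
  have hFd : HasDerivAt F
      (∑ j ∈ Ssup, (1 / w j) * (deriv ghat (w j * (1 - csum D1 xs j)) * (w j * -δ j))) 0 := by
    apply HasDerivAt.fun_sum
    intro j hj
    have h1 : HasDerivAt (fun t : ℝ => csum D1 xs j + t * δ j) (δ j) 0 := by
      simpa using ((hasDerivAt_id (0:ℝ)).mul_const (δ j)).const_add (csum D1 xs j)
    have h2 : HasDerivAt (fun t : ℝ => 1 - (csum D1 xs j + t * δ j)) (-δ j) 0 :=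
      h1.const_sub 1
    have h3 : HasDerivAt (fun t : ℝ => w j * (1 - (csum D1 xs j + t * δ j))) (w j * -δ j) 0 :=
      h2.const_mul (w j)
    have h4 : HasDerivAt ghat (deriv ghat (w j * (1 - csum D1 xs j)))
        (w j * (1 - (csum D1 xs j + 0 * δ j))) := by
      have heq : w j * (1 - (csum D1 xs j + 0 * δ j)) = w j * (1 - csum D1 xs j) := by ring
      rw [heq]
      exact (hd _).hasDerivAt
    have h5 := h4.comp 0 h3
    exact h5.const_mul (1 / w j)
  have hcsum_t : ∀ (s : ℝ) (j : S),
      ∑ i ∈ D1, (xs i j + s * (x i j - xs i j)) = csum D1 xs j + s * δ j := by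
    intro s j
    rw [Finset.sum_add_distrib, ← Finset.mul_sum, Finset.sum_sub_distrib]
    rfl
  have hFt : ∀ s : ℝ, F s = PgObj ghat w D1 Ssup (fun i j => xs i j + s * (x i j - xs i j)) := by
    intro s
    unfold PgObj
    apply Finset.sum_congr rfl
    intro j _
    rw [hcsum_t s j]
  have hmin : ∀ t ∈ Set.Icc (0:ℝ) 1, F 0 ≤ F t := by
    intro t ht
    obtain ⟨ht0, ht1⟩ := ht
    have hfeas : IsFracMatching Ed D1 Ssup (fun i j => xs i j + t * (x i j - xs i j)) := by
      obtain ⟨ha0, hag, har, hac⟩ := hxs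
      obtain ⟨hb0, hbg, hbr, hbc⟩ := hx
      refine ⟨fun i j => by
          dsimp only
          nlinarith [mul_nonneg ht0 (hb0 i j), mul_nonneg (sub_nonneg.2 ht1) (ha0 i j)],
        fun i j hij => by simp [hag i j hij, hbg i j hij], fun i hi => ?_, fun j hj => ?_⟩
      · have hsum : ∑ j ∈ Ssup, (xs i j + t * (x i j - xs i j))
            = (∑ j ∈ Ssup, xs i j) + t * ((∑ j ∈ Ssup, x i j) - ∑ j ∈ Ssup, xs i j) := by
          rw [Finset.sum_add_distrib, ← Finset.mul_sum, Finset.sum_sub_distrib]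
        rw [hsum]
        nlinarith [mul_le_mul_of_nonneg_left (hbr i hi) ht0,
          mul_le_mul_of_nonneg_left (har i hi) (sub_nonneg.2 ht1)]
      · have hsum : ∑ i ∈ D1, (xs i j + t * (x i j - xs i j))
            = (∑ i ∈ D1, xs i j) + t * ((∑ i ∈ D1, x i j) - ∑ i ∈ D1, xs i j) := by
          rw [Finset.sum_add_distrib, ← Finset.mul_sum, Finset.sum_sub_distrib]
        rw [hsum]
        nlinarith [mul_le_mul_of_nonneg_left (hbc j hj) ht0,
          mul_le_mul_of_nonneg_left (hac j hj) (sub_nonneg.2 ht1)]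
    have hF0 : F 0 = PgObj ghat w D1 Ssup xs := by
      rw [hFt 0]
      congr 1
      funext i j
      ring
    rw [hF0, hFt t]
    exact hopt _ hfeas
  have h0 := my_first_order hFd hmin
  have hsimp : ∀ j ∈ Ssup,
      (1 / w j) * (deriv ghat (w j * (1 - csum D1 xs j)) * (w j * -δ j))
        = deriv ghat (w j * (1 - csum D1 xs j)) * (csum D1 xs j - csum D1 x j) := by
    intro j hj
    have hwj : w j ≠ 0 := (hw j hj).ne'
    have : -δ j = csum D1 xs j - csum D1 x j := by rw [hδ]; ring
    rw [this]
    field_simp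
  rw [Finset.sum_congr rfl hsimp] at h0
  have hsplit : ∑ j ∈ Ssup, deriv ghat (w j * (1 - csum D1 xs j)) * (csum D1 xs j - csum D1 x j)
      = (∑ j ∈ Ssup, deriv ghat (w j * (1 - csum D1 xs j)) * csum D1 xs j)
        - ∑ j ∈ Ssup, deriv ghat (w j * (1 - csum D1 xs j)) * csum D1 x j := by
    rw [← Finset.sum_sub_distrib]
    apply Finset.sum_congr rfl
    intro j _
    ring
  rw [hsplit] at h0
  linarith

/-- **Theorem (the optimal solution of `P^g` does not depend on `g`).**
Fix two differentiable, strictly increasing, strictly convex functions `ĝ, g : ℝ → ℝ`.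
If `x*` is an optimal solution of the convex program `P^ĝ`, then `x*` is also an optimal
solution of the convex program `P^g`. -/
theorem PgObj_optimal_independent_of_g
    {D S : Type*} [DecidableEq D] [DecidableEq S]
    (D1 D2 : Finset D) (Ssup : Finset S) (Ed : Finset (D × S)) (w : S → ℝ)
    (hdisj : Disjoint D1 D2)
    (hE : ∀ e ∈ Ed, e.1 ∈ D1 ∪ D2 ∧ e.2 ∈ Ssup)
    (hw : ∀ j ∈ Ssup, 0 < w j)
    (ghat g : ℝ → ℝ)
    (hghat_diff : Differentiable ℝ ghat)
    (hghat_mono : StrictMono ghat)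
    (hghat_conv : StrictConvexOn ℝ Set.univ ghat)
    (hg_diff : Differentiable ℝ g)
    (hg_mono : StrictMono g)
    (hg_conv : StrictConvexOn ℝ Set.univ g)
    (xs : D → S → ℝ)
    (hxs : IsFracMatching Ed D1 Ssup xs)
    (hxs_opt : ∀ x, IsFracMatching Ed D1 Ssup x →
      PgObj ghat w D1 Ssup xs ≤ PgObj ghat w D1 Ssup x) :
    ∀ x, IsFracMatching Ed D1 Ssup x →
      PgObj g w D1 Ssup xs ≤ PgObj g w D1 Ssup x := by
  classical
  set grid := Ed.filter (fun e : D × S => e.1 ∈ D1 ∧ e.2 ∈ Ssup) with hgriddef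
  have hgrid : ∀ e ∈ grid, e.1 ∈ D1 ∧ e.2 ∈ Ssup := fun e he => (Finset.mem_filter.1 he).2
  have hGF : ∀ z, GFeas grid D1 Ssup z → IsFracMatching Ed D1 Ssup z := by
    rintro z ⟨h0, hg', hr, hc⟩
    exact ⟨h0, fun i j hij => hg' i j fun hmem => hij (Finset.mem_filter.1 hmem).1, hr, hc⟩
  have htrunc : ∀ z, IsFracMatching Ed D1 Ssup z →
      GFeas grid D1 Ssup (fun i j => if (i, j) ∈ grid then z i j else 0) ∧
      ∀ j ∈ Ssup,
        csum D1 (fun i j => if (i, j) ∈ grid then z i j else 0) j = csum D1 z j := by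
    rintro z ⟨h0, hzg, hr, hc⟩
    have hcs : ∀ j ∈ Ssup,
        csum D1 (fun i j => if (i, j) ∈ grid then z i j else 0) j = csum D1 z j := by
      intro j hj
      unfold csum
      apply Finset.sum_congr rfl
      intro i hi
      by_cases hm : (i, j) ∈ grid
      · simp [hm]
      · have hEd : (i, j) ∉ Ed := fun hEd => hm (Finset.mem_filter.2 ⟨hEd, hi, hj⟩)
        simp [hm, hzg i j hEd]
    refine ⟨⟨fun i j => by dsimp only; split_ifs; exacts [h0 i j, le_refl 0],
      fun i j hij => by simp [hij], fun i hi => ?_, fun j hj => ?_⟩, hcs⟩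
    · refine le_trans (Finset.sum_le_sum fun j _ => ?_) (hr i hi)
      dsimp only
      split_ifs
      exacts [le_refl _, h0 i j]
    · rw [hcs j hj]
      exact hc j hj
  set p : S → ℝ := fun j => deriv ghat (w j * (1 - csum D1 xs j)) with hpdef
  set q : S → ℝ := fun j => deriv g (w j * (1 - csum D1 xs j)) with hqdef
  have hppos : ∀ j, 0 < p j := fun j => my_deriv_pos hghat_diff hghat_mono hghat_conv _
  have hqpos : ∀ j, 0 < q j := fun j => my_deriv_pos hg_diff hg_mono hg_conv _
  have hpq : ∀ j k, p j ≤ p k → q j ≤ q k := by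
    intro j k h
    have hz : w j * (1 - csum D1 xs j) ≤ w k * (1 - csum D1 xs k) := by
      by_contra h'
      push_neg at h'
      exact absurd (my_deriv_strictMono hghat_diff hghat_conv h') (not_lt.2 h)
    exact (my_deriv_strictMono hg_diff hg_conv).monotone hz
  set A : D → S → ℝ := fun i j => if (i, j) ∈ grid then xs i j else 0 with hAdef
  obtain ⟨hAfeas, hAcs⟩ := htrunc xs hxs
  have hPoptA : ∀ z, GFeas grid D1 Ssup z →
      ∑ j ∈ Ssup, p j * csum D1 z j ≤ ∑ j ∈ Ssup, p j * csum D1 A j := by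
    intro z hz
    have h1 := first_order_opt D1 Ssup Ed w hw ghat hghat_diff xs hxs hxs_opt z (hGF z hz)
    have heq : ∑ j ∈ Ssup, p j * csum D1 A j = ∑ j ∈ Ssup, p j * csum D1 xs j :=
      Finset.sum_congr rfl fun j hj => by rw [hAcs j hj]
    rw [heq]
    simpa only [hpdef] using h1
  set Φ : (D → S → ℝ) → ℝ := fun z => ∑ j ∈ Ssup, q j * csum D1 z j with hΦdef
  set μ : (D → S → ℝ) → ℝ :=
    fun z => ∑ j ∈ Ssup, max (csum D1 z j - csum D1 A j) 0 with hμdef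
  have hev : ∀ (i : D) (j : S), Continuous (fun x : D → S → ℝ => x i j) :=
    fun i j => (continuous_apply j).comp (continuous_apply i)
  have hcsc : ∀ j, Continuous (fun z : D → S → ℝ => csum D1 z j) := fun j => by
    unfold csum
    exact continuous_finset_sum _ fun i _ => hev i j
  have hΦc : Continuous Φ := continuous_finset_sum _ fun j _ => continuous_const.mul (hcsc j)
  have hμc : Continuous μ :=
    continuous_finset_sum _ fun j _ => ((hcsc j).sub continuous_const).max continuous_const
  have hK := gfeas_isCompact hgrid
  obtain ⟨B0, hB0K, hB0max⟩ := hK.exists_isMaxOn ⟨A, hAfeas⟩ hΦc.continuousOn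
  have hK2 : IsCompact ({x : D → S → ℝ | GFeas grid D1 Ssup x} ∩ {x | Φ x = Φ B0}) :=
    hK.inter_right (isClosed_eq hΦc continuous_const)
  obtain ⟨B, hBK2, hBmin⟩ := hK2.exists_isMinOn ⟨B0, hB0K, rfl⟩ hμc.continuousOn
  obtain ⟨hBfeas, hBΦ⟩ := hBK2
  have hBmax : ∀ z, GFeas grid D1 Ssup z → Φ z ≤ Φ B := by
    intro z hz
    have h1 := isMaxOn_iff.1 hB0max z hz
    rw [Set.mem_setOf_eq] at hBΦ
    rw [hBΦ]
    exact h1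
  have hBminm : ∀ z, GFeas grid D1 Ssup z → Φ z = Φ B → μ B ≤ μ z := by
    intro z hz hΦz
    rw [Set.mem_setOf_eq] at hBΦ
    exact isMinOn_iff.1 hBmin z ⟨hz, by rw [Set.mem_setOf_eq, hΦz, hBΦ]⟩
  have hBA : ∀ j ∈ Ssup, csum D1 B j ≤ csum D1 A j := by
    by_contra hcon
    push_neg at hcon
    obtain ⟨j1, hj1S, hj1⟩ := hcon
    set T := Ssup.filter (fun c => csum D1 A c < csum D1 B c) with hTdef
    have hTne : T.Nonempty := ⟨j1, Finset.mem_filter.2 ⟨hj1S, hj1⟩⟩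
    obtain ⟨j, hjT, hjmax⟩ := T.exists_max_image q hTne
    obtain ⟨hjS, hjlt⟩ := Finset.mem_filter.1 hjT
    rcases exchange hgrid hAfeas hBfeas hjS hjlt one_pos with
      ⟨ε, hε, _, A', hA'f, hA'cs⟩ | ⟨k, hkS, hkBA, ε, hε, _, A', hA'f, hA'cs⟩
    · have h1 := hPoptA A' hA'f
      have hstep : ∀ c ∈ Ssup, p c * csum D1 A' c
          = p c * csum D1 A c + (if c = j then p c * ε else 0) := by
        intro c hc
        rw [hA'cs c]
        split_ifs <;> ring
      rw [Finset.sum_congr rfl hstep, Finset.sum_add_distrib,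
        Finset.sum_ite_eq' Ssup j (fun c => p c * ε), if_pos hjS] at h1
      nlinarith [mul_pos (hppos j) hε]
    · have h1 := hPoptA A' hA'f
      have hstep : ∀ c ∈ Ssup, p c * csum D1 A' c
          = p c * csum D1 A c + (if c = j then p c * ε else 0)
            - (if c = k then p c * ε else 0) := by
        intro c hc
        rw [hA'cs c]
        split_ifs <;> ring
      rw [Finset.sum_congr rfl hstep, Finset.sum_sub_distrib, Finset.sum_add_distrib,
        Finset.sum_ite_eq' Ssup j (fun c => p c * ε),
        Finset.sum_ite_eq' Ssup k (fun c => p c * ε), if_pos hjS, if_pos hkS] at h1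
      have hpjk : p j ≤ p k := by nlinarith
      have hqjk : q j ≤ q k := hpq j k hpjk
      have hgapk : (0:ℝ) < csum D1 A k - csum D1 B k := by linarith
      rcases exchange hgrid hBfeas hAfeas hkS hkBA hgapk with
        ⟨ε', hε', _, B', hB'f, hB'cs⟩ | ⟨k2, hk2S, hk2lt, ε', hε', hε'le, B', hB'f, hB'cs⟩
      · have h3 : Φ B' = Φ B + q k * ε' := by
          simp only [hΦdef]
          have hstep' : ∀ c ∈ Ssup, q c * csum D1 B' c
              = q c * csum D1 B c + (if c = k then q c * ε' else 0) := by
            intro c hc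
            rw [hB'cs c]
            split_ifs <;> ring
          rw [Finset.sum_congr rfl hstep', Finset.sum_add_distrib,
            Finset.sum_ite_eq' Ssup k (fun c => q c * ε'), if_pos hkS]
        have h4 := hBmax B' hB'f
        nlinarith [mul_pos (hqpos k) hε']
      · have hk2T : k2 ∈ T := Finset.mem_filter.2 ⟨hk2S, hk2lt⟩
        have hq2 : q k2 ≤ q j := hjmax k2 hk2T
        have hkk2 : k ≠ k2 := by
          intro h
          rw [h] at hkBA
          linarith
        have h3 : Φ B' = Φ B + q k * ε' - q k2 * ε' := by
          simp only [hΦdef]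
          have hstep' : ∀ c ∈ Ssup, q c * csum D1 B' c
              = q c * csum D1 B c + (if c = k then q c * ε' else 0)
                - (if c = k2 then q c * ε' else 0) := by
            intro c hc
            rw [hB'cs c]
            split_ifs <;> ring
          rw [Finset.sum_congr rfl hstep', Finset.sum_sub_distrib, Finset.sum_add_distrib,
            Finset.sum_ite_eq' Ssup k (fun c => q c * ε'),
            Finset.sum_ite_eq' Ssup k2 (fun c => q c * ε'), if_pos hkS, if_pos hk2S]
        have hΦeq : Φ B' = Φ B := by
          refine le_antisymm (hBmax B' hB'f) ?_
          rw [h3]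
          nlinarith [mul_le_mul_of_nonneg_right (le_trans hq2 hqjk) hε'.le]
        have hμlt : μ B' < μ B := by
          simp only [hμdef]
          refine Finset.sum_lt_sum (fun c hc => ?_) ⟨k2, hk2S, ?_⟩
          · rw [hB'cs c]
            by_cases h1c : c = k
            · have hck2 : c ≠ k2 := by rw [h1c]; exact hkk2
              rw [if_pos h1c, if_neg hck2, h1c]
              refine le_trans (max_le (by linarith) (le_refl 0)) (le_max_right _ _)
            · by_cases h2c : c = k2
              · rw [if_neg h1c, if_pos h2c, h2c]
                exact max_le_max (by linarith) (le_refl 0)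
              · rw [if_neg h1c, if_neg h2c]
                simp
          · rw [hB'cs k2, if_neg (fun h => hkk2 h.symm), if_pos rfl]
            have hold : max (csum D1 B k2 - csum D1 A k2) 0 = csum D1 B k2 - csum D1 A k2 :=
              max_eq_left (by linarith)
            rw [hold]
            exact max_lt (by linarith) (by linarith)
        exact absurd (hBminm B' hB'f hΦeq) (not_le.2 hμlt)
  have hQopt : ∀ z, IsFracMatching Ed D1 Ssup z →
      ∑ j ∈ Ssup, q j * csum D1 z j ≤ ∑ j ∈ Ssup, q j * csum D1 xs j := by
    intro z hz
    obtain ⟨hzf, hzcs⟩ := htrunc z hz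
    have h1 : Φ (fun i j => if (i, j) ∈ grid then z i j else 0) ≤ Φ B := hBmax _ hzf
    have h2 : Φ B ≤ Φ A :=
      Finset.sum_le_sum fun j hj => mul_le_mul_of_nonneg_left (hBA j hj) (hqpos j).le
    have e1 : Φ (fun i j => if (i, j) ∈ grid then z i j else 0)
        = ∑ j ∈ Ssup, q j * csum D1 z j :=
      Finset.sum_congr rfl fun j hj => by rw [hzcs j hj]
    have e2 : Φ A = ∑ j ∈ Ssup, q j * csum D1 xs j :=
      Finset.sum_congr rfl fun j hj => by rw [hAcs j hj]
    rw [e1] at h1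
    rw [e2] at h2
    linarith
  intro x hxf
  have hq0 : 0 ≤ ∑ j ∈ Ssup, q j * (csum D1 xs j - csum D1 x j) := by
    have h := hQopt x hxf
    have hsplit : ∑ j ∈ Ssup, q j * (csum D1 xs j - csum D1 x j)
        = (∑ j ∈ Ssup, q j * csum D1 xs j) - ∑ j ∈ Ssup, q j * csum D1 x j := by
      rw [← Finset.sum_sub_distrib]
      exact Finset.sum_congr rfl fun j _ => by ring
    rw [hsplit]
    linarith
  have hterm : ∀ j ∈ Ssup,
      (1 / w j) * g (w j * (1 - csum D1 xs j)) + q j * (csum D1 xs j - csum D1 x j)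
        ≤ (1 / w j) * g (w j * (1 - csum D1 x j)) := by
    intro j hj
    have hwj : 0 < w j := hw j hj
    have hwne : w j ≠ 0 := hwj.ne'
    have hgi := my_grad_ineq hg_diff hg_conv.convexOn (w j * (1 - csum D1 xs j))
      (w j * (1 - csum D1 x j))
    have h1 := mul_le_mul_of_nonneg_left hgi (le_of_lt (one_div_pos.2 hwj))
    have key : (1 / w j) * (g (w j * (1 - csum D1 xs j))
          + deriv g (w j * (1 - csum D1 xs j))
            * (w j * (1 - csum D1 x j) - w j * (1 - csum D1 xs j)))
        = (1 / w j) * g (w j * (1 - csum D1 xs j))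
          + q j * (csum D1 xs j - csum D1 x j) := by
      simp only [hqdef]
      field_simp
      ring
    rw [key] at h1
    exact h1
  have hsum := Finset.sum_le_sum hterm
  rw [Finset.sum_add_distrib] at hsum
  show (∑ j ∈ Ssup, (1 / w j) * g (w j * (1 - csum D1 xs j)))
      ≤ ∑ j ∈ Ssup, (1 / w j) * g (w j * (1 - csum D1 x j))
  linarith
end

section
/- Let L be a finite index set and for each l ∈ L let real numbers m_l, o_l, n_l satisfy 0 ≤ m_l ≤ o_l ≤ n_l and n_l > 0, and suppose Σ_l o_l > 0. Let γ ∈ [0,1] with Σ_l (o_l − m_l) = (1−γ)·Σ_l o_l, and let β ≥ 0. Then γ·Σ_l o_l + β·Σ_l ((n_l − m_l)/n_l)·(o_l − m_l) ≥ (γ + β(1−γ)²)·Σ_l o_l. -/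
/-!
Since `0 ≤ m ≤ o ≤ n`, each pair satisfies `(o - m)² ≤ ((n - m)/n · (o - m)) · o`, so Cauchy–Schwarz
gives `(Σ (o - m))² ≤ (Σ (n - m)/n · (o - m)) · Σ o`. The balance condition turns the left side into
`(1 - γ)² (Σ o)²`, and dividing by `Σ o` bounds the second-stage term below by `(1 - γ)² Σ o`.
-/

open Finset

section

variable {K : Type*} [Field K] [LinearOrder K] [IsStrictOrderedRing K]

theorem sq_sub_le_div_mul_mul {m o n : K} (hm : 0 ≤ m) (hmo : m ≤ o) (hon : o ≤ n) (hn : 0 < n) :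
    (o - m) ^ 2 ≤ (n - m) / n * (o - m) * o := by
  have hgap : (n - m) / n * (o - m) * o - (o - m) ^ 2 = (o - m) * m * (n - o) / n := by
    field_simp
    ring
  have hgap_nonneg : 0 ≤ (o - m) * m * (n - o) / n :=
    div_nonneg (mul_nonneg (mul_nonneg (sub_nonneg.2 hmo) hm) (sub_nonneg.2 hon)) hn.le
  linarith

theorem sq_sum_sub_le_sum_div_mul_mul_sum {ι : Type*} (L : Finset ι) {m o n : ι → K}
    (hm : ∀ l ∈ L, 0 ≤ m l) (hmo : ∀ l ∈ L, m l ≤ o l) (hon : ∀ l ∈ L, o l ≤ n l)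
    (hn : ∀ l ∈ L, 0 < n l) :
    (∑ l ∈ L, (o l - m l)) ^ 2 ≤ (∑ l ∈ L, (n l - m l) / n l * (o l - m l)) * ∑ l ∈ L, o l :=
  sum_sq_le_sum_mul_sum_of_sq_le_mul L
    (fun l hl => mul_nonneg (div_nonneg (by linarith [hm l hl, hmo l hl, hon l hl]) (hn l hl).le)
      (sub_nonneg.2 (hmo l hl)))
    (fun l hl => (hm l hl).trans (hmo l hl))
    (fun l hl => sq_sub_le_div_mul_mul (hm l hl) (hmo l hl) (hon l hl) (hn l hl))

end

theorem factor_revealing_robustness_value_general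
    {ι : Type*} (L : Finset ι) (m o n : ι → ℝ)
    (hm : ∀ l ∈ L, 0 ≤ m l)
    (hmo : ∀ l ∈ L, m l ≤ o l)
    (hon : ∀ l ∈ L, o l ≤ n l)
    (hn : ∀ l ∈ L, 0 < n l)
    (hosum : 0 < ∑ l ∈ L, o l)
    (γ : ℝ)
    (hbal : ∑ l ∈ L, (o l - m l) = (1 - γ) * ∑ l ∈ L, o l)
    (β : ℝ) (hβ : 0 ≤ β) :
    γ * ∑ l ∈ L, o l + β * ∑ l ∈ L, (n l - m l) / n l * (o l - m l) ≥
      (γ + β * (1 - γ) ^ 2) * ∑ l ∈ L, o l := by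
  have hcs := sq_sum_sub_le_sum_div_mul_mul_sum L hm hmo hon hn
  rw [hbal] at hcs
  have hsecond : (1 - γ) ^ 2 * ∑ l ∈ L, o l ≤ ∑ l ∈ L, (n l - m l) / n l * (o l - m l) :=
    le_of_mul_le_mul_right (by linarith) hosum
  linarith [mul_le_mul_of_nonneg_left hsecond hβ]

/-- **Final evaluation of the factor-revealing program for approximate second-stage
matchings (via Cauchy–Schwarz).**
If `0 ≤ m_l ≤ o_l ≤ n_l`, `n_l > 0` for all `l`, `Σ o_l > 0`, `γ ∈ [0,1]` with
`Σ (o_l − m_l) = (1−γ)·Σ o_l`, and `β ≥ 0`, then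
`γ·Σ o_l + β·Σ ((n_l − m_l)/n_l)·(o_l − m_l) ≥ (γ + β(1−γ)²)·Σ o_l`. -/
theorem factor_revealing_robustness_value
    {ι : Type*} (L : Finset ι) (m o n : ι → ℝ)
    (hm : ∀ l ∈ L, 0 ≤ m l)
    (hmo : ∀ l ∈ L, m l ≤ o l)
    (hon : ∀ l ∈ L, o l ≤ n l)
    (hn : ∀ l ∈ L, 0 < n l)
    (hosum : 0 < ∑ l ∈ L, o l)
    (γ : ℝ) (hγ0 : 0 ≤ γ) (hγ1 : γ ≤ 1)
    (hbal : ∑ l ∈ L, (o l - m l) = (1 - γ) * ∑ l ∈ L, o l)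
    (β : ℝ) (hβ : 0 ≤ β) :
    γ * ∑ l ∈ L, o l + β * ∑ l ∈ L, (n l - m l) / n l * (o l - m l) ≥
      (γ + β * (1 - γ) ^ 2) * ∑ l ∈ L, o l :=
  factor_revealing_robustness_value_general L m o n hm hmo hon hn hosum γ hbal β hβ
end

section
/- (Refined competitive ratio.) Let x* be an optimal solution of the convex program P^g, let y*_j := Σ_i x*_{ij} for j ∈ S, and let μ be a distribution over matchings of G[D1,S] with edge marginals x*. Then for every realization R ⊆ D2, E_{M1∼μ}[ Σ_{j∈V_S(M1)} w_j + maxWM(R, S∖V_S(M1)) ] ≥ (min_{j∈S} (1 − y*_j + (y*_j)²))·maxWM(D1∪R, S). In particular, Algorithm 1 is (min_{j∈S} (1 − y*_j + (y*_j)²))-competitive against the optimum offline benchmark; since 1 − y + y² ≥ 3/4 on [0,1], this refines the 3/4 guarantee and approaches 1 when every y*_j is close to 0 or 1. -/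
open scoped BigOperators

/-- `M` is a matching contained in the edge set `Ed`:
a set of pairwise vertex-disjoint edges. -/
def IsMatchingIn {D S : Type*} (Ed M : Finset (D × S)) : Prop :=
  M ⊆ Ed ∧ ∀ e ∈ M, ∀ e' ∈ M, e ≠ e' → e.1 ≠ e'.1 ∧ e.2 ≠ e'.2

/-- `M` is a matching of `Ed` using only edges between `A` and `T`. -/
def IsMatchingBtw {D S : Type*} (Ed : Finset (D × S)) (A : Finset D) (T : Finset S)
    (M : Finset (D × S)) : Prop :=
  IsMatchingIn Ed M ∧ ∀ e ∈ M, e.1 ∈ A ∧ e.2 ∈ T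

/-- The set of supply vertices covered by the edge set `M`. -/
def suppliesOf {D S : Type*} [DecidableEq S] (M : Finset (D × S)) : Finset S :=
  M.image Prod.snd

/-- `maxWM w Ed A T`: the maximum, over matchings using only edges between `A` and `T`,
of the total weight of matched supply vertices. -/
noncomputable def maxWM {D S : Type*} (w : S → ℝ) (Ed : Finset (D × S))
    (A : Finset D) (T : Finset S) : ℝ :=
  sSup ((fun M => ∑ e ∈ M, w e.2) '' {M | IsMatchingBtw Ed A T M})

lemma matchings_finite {D S : Type*} (Ed : Finset (D × S)) (A : Finset D) (T : Finset S) :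
    {M | IsMatchingBtw Ed A T M}.Finite := by
  apply Set.Finite.subset (Ed.powerset : Finset (Finset (D × S))).finite_toSet
  intro M hM
  simp only [Finset.coe_powerset, Set.mem_preimage, Set.mem_powerset_iff, Finset.coe_subset]
  exact hM.1.1

lemma empty_matching {D S : Type*} (Ed : Finset (D × S)) (A : Finset D) (T : Finset S) :
    IsMatchingBtw Ed A T (∅ : Finset (D × S)) := by
  refine ⟨⟨Finset.empty_subset _, ?_⟩, ?_⟩ <;> simp

lemma le_maxWM {D S : Type*} (w : S → ℝ) (Ed : Finset (D × S)) (A : Finset D) (T : Finset S)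
    {M : Finset (D × S)} (h : IsMatchingBtw Ed A T M) :
    (∑ e ∈ M, w e.2) ≤ maxWM w Ed A T := by
  apply le_csSup ((matchings_finite Ed A T).image _).bddAbove
  exact ⟨M, h, rfl⟩

lemma maxWM_le {D S : Type*} (w : S → ℝ) (Ed : Finset (D × S)) (A : Finset D) (T : Finset S)
    {B : ℝ} (h : ∀ M, IsMatchingBtw Ed A T M → (∑ e ∈ M, w e.2) ≤ B) :
    maxWM w Ed A T ≤ B := by
  rw [maxWM]
  apply csSup_le
  · exact ⟨_, Set.mem_image_of_mem _ (empty_matching Ed A T)⟩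
  · rintro b ⟨M, hM, rfl⟩
    exact h M hM

lemma slope_pair {g : ℝ → ℝ} (hg_conv : StrictConvexOn ℝ Set.univ g)
    {wj wj' ε β β' : ℝ} (hwj : 0 < wj) (hwj' : 0 < wj') (hε : 0 < ε)
    (hsep : β' + wj' * ε < β - wj * ε) :
    (1 / wj) * g (β - wj * ε) - (1 / wj) * g β
      + ((1 / wj') * g (β' + wj' * ε) - (1 / wj') * g β') < 0 := by
  have hab : β' < β' + wj' * ε := by nlinarith
  have hcd : β - wj * ε < β := by nlinarith
  have s1 := hg_conv.slope_strict_mono_adjacent (Set.mem_univ β')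
    (Set.mem_univ (β - wj * ε)) hab hsep
  have s2 := hg_conv.slope_strict_mono_adjacent (Set.mem_univ (β' + wj' * ε))
    (Set.mem_univ β) hsep hcd
  have hmain := s1.trans s2
  have e1 : β' + wj' * ε - β' = wj' * ε := by ring
  have e2 : β - (β - wj * ε) = wj * ε := by ring
  rw [e1, e2] at hmain
  have h5 := (div_lt_div_iff₀ (by positivity) (by positivity)).mp hmain
  rw [← mul_assoc, ← mul_assoc] at h5
  have h6 := (mul_lt_mul_iff_left₀ hε).mp h5
  have h7 : (g (β - wj * ε) - g β) * wj' + (g (β' + wj' * ε) - g β') * wj < 0 := by linarith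
  have h8 : (1 / wj) * g (β - wj * ε) - (1 / wj) * g β
      + ((1 / wj') * g (β' + wj' * ε) - (1 / wj') * g β')
      = ((g (β - wj * ε) - g β) * wj' + (g (β' + wj' * ε) - g β') * wj) / (wj * wj') := by
    field_simp
  rw [h8]
  exact div_neg_of_neg_of_pos h7 (by positivity)

lemma row_saturated {D S : Type*} [DecidableEq D] [DecidableEq S]
    (D1 : Finset D) (Ssup : Finset S) (Ed : Finset (D × S)) (w : S → ℝ)
    (hw : ∀ j ∈ Ssup, 0 < w j) (g : ℝ → ℝ) (hg_mono : StrictMono g)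
    (xs : D → S → ℝ) (hxs : IsFracMatching Ed D1 Ssup xs)
    (hxs_opt : ∀ x, IsFracMatching Ed D1 Ssup x → PgObj g w D1 Ssup xs ≤ PgObj g w D1 Ssup x)
    {i : D} {j : S} (hi : i ∈ D1) (hj : j ∈ Ssup) (hij : (i, j) ∈ Ed)
    (hylt : ∑ i' ∈ D1, xs i' j < 1) :
    ∑ j' ∈ Ssup, xs i j' = 1 := by
  obtain ⟨hnn, hedge, hrow, hcol⟩ := hxs
  by_contra hne
  have hrowlt : ∑ j' ∈ Ssup, xs i j' < 1 := lt_of_le_of_ne (hrow i hi) hne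
  set ε : ℝ := min (1 - ∑ i' ∈ D1, xs i' j) (1 - ∑ j' ∈ Ssup, xs i j') with hεdef
  have hε : 0 < ε := lt_min (by linarith) (by linarith)
  have hε1 : ε ≤ 1 - ∑ i' ∈ D1, xs i' j := min_le_left _ _
  have hε2 : ε ≤ 1 - ∑ j' ∈ Ssup, xs i j' := min_le_right _ _
  set x' : D → S → ℝ := fun a b => xs a b + if a = i ∧ b = j then ε else 0 with hx'def
  have hcolsum : ∀ b, ∑ a ∈ D1, x' a b = (∑ a ∈ D1, xs a b) + if b = j then ε else 0 := by
    intro b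
    simp only [hx'def]
    rw [Finset.sum_add_distrib]
    congr 1
    by_cases hb : b = j
    · subst hb
      simp [Finset.sum_ite_eq', hi]
    · simp [hb]
  have hfeas : IsFracMatching Ed D1 Ssup x' := by
    refine ⟨?_, ?_, ?_, ?_⟩
    · intro a b
      have h0 := hnn a b
      simp only [hx'def]
      split <;> linarith
    · intro a b hab
      have h0 := hedge a b hab
      simp only [hx'def]
      split
      · next h =>
        obtain ⟨h1, h2⟩ := h
        subst h1; subst h2
        exact absurd hij hab
      · simp [h0]
    · intro a ha
      by_cases hai : a = i
      · subst hai
        have hs : ∑ b ∈ Ssup, x' a b = (∑ b ∈ Ssup, xs a b) + ε := by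
          simp only [hx'def, true_and]
          rw [Finset.sum_add_distrib]
          simp [Finset.sum_ite_eq', hj]
        rw [hs]
        linarith
      · have hs : ∑ b ∈ Ssup, x' a b = ∑ b ∈ Ssup, xs a b := by
          apply Finset.sum_congr rfl
          intro b _
          simp [hx'def, hai]
        rw [hs]
        exact hrow a ha
    · intro b hb
      rw [hcolsum b]
      by_cases hbj : b = j
      · subst hbj
        simp only [eq_self_iff_true, if_true]
        linarith
      · simp only [if_neg hbj, add_zero]
        exact hcol b hb
  have hlt : PgObj g w D1 Ssup x' < PgObj g w D1 Ssup xs := by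
    rw [PgObj, PgObj]
    apply Finset.sum_lt_sum
    · intro b hb
      rw [hcolsum b]
      by_cases hbj : b = j
      · subst hbj
        simp only [eq_self_iff_true, if_true]
        have hwb := hw _ hb
        have harg : w b * (1 - ((∑ a ∈ D1, xs a b) + ε)) < w b * (1 - ∑ a ∈ D1, xs a b) := by
          apply mul_lt_mul_of_pos_left _ hwb
          linarith
        have hg := (hg_mono harg).le
        have hwinv : (0:ℝ) < 1 / w b := by positivity
        exact mul_le_mul_of_nonneg_left hg hwinv.le
      · simp [hbj]
    · refine ⟨j, hj, ?_⟩
      rw [hcolsum j]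
      simp only [eq_self_iff_true, if_true]
      have hwb := hw _ hj
      have harg : w j * (1 - ((∑ a ∈ D1, xs a j) + ε)) < w j * (1 - ∑ a ∈ D1, xs a j) := by
        apply mul_lt_mul_of_pos_left _ hwb
        linarith
      have hwinv : (0:ℝ) < 1 / w j := by positivity
      exact mul_lt_mul_of_pos_left (hg_mono harg) hwinv
  exact absurd (hxs_opt x' hfeas) (not_le.mpr hlt)

lemma beta_mono {D S : Type*} [DecidableEq D] [DecidableEq S]
    (D1 : Finset D) (Ssup : Finset S) (Ed : Finset (D × S)) (w : S → ℝ)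
    (hw : ∀ j ∈ Ssup, 0 < w j) (g : ℝ → ℝ) (hg_conv : StrictConvexOn ℝ Set.univ g)
    (xs : D → S → ℝ) (hxs : IsFracMatching Ed D1 Ssup xs)
    (hxs_opt : ∀ x, IsFracMatching Ed D1 Ssup x → PgObj g w D1 Ssup xs ≤ PgObj g w D1 Ssup x)
    {i : D} {j j' : S} (hi : i ∈ D1) (hj : j ∈ Ssup) (hj' : j' ∈ Ssup)
    (hij : (i, j) ∈ Ed) (hpos : 0 < xs i j') :
    w j * (1 - ∑ i' ∈ D1, xs i' j) ≤ w j' * (1 - ∑ i' ∈ D1, xs i' j') := by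
  obtain ⟨hnn, hedge, hrow, hcol⟩ := hxs
  have hwj := hw _ hj
  have hwj' := hw _ hj'
  by_cases hy1 : 1 ≤ ∑ i' ∈ D1, xs i' j
  · have h1 : w j * (1 - ∑ i' ∈ D1, xs i' j) ≤ 0 :=
      mul_nonpos_of_nonneg_of_nonpos hwj.le (by linarith)
    have h2 : 0 ≤ w j' * (1 - ∑ i' ∈ D1, xs i' j') := by
      apply mul_nonneg hwj'.le
      have := hcol j' hj'
      linarith
    linarith
  push_neg at hy1
  by_cases hjj : j' = j
  · subst hjj; exact le_rfl
  have hne' : j ≠ j' := fun h => hjj h.symm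
  by_contra hlt
  push_neg at hlt
  set β : ℝ := w j * (1 - ∑ i' ∈ D1, xs i' j) with hβ
  set β' : ℝ := w j' * (1 - ∑ i' ∈ D1, xs i' j') with hβ'
  have hβlt : β' < β := hlt
  set ε : ℝ := min (min (xs i j') (1 - ∑ i' ∈ D1, xs i' j)) ((β - β') / (w j + w j' + 1))
    with hεdef
  have hε : 0 < ε := by
    apply lt_min (lt_min hpos (by linarith))
    apply div_pos (by linarith) (by linarith)
  have hε1 : ε ≤ xs i j' := (min_le_left _ _).trans (min_le_left _ _)
  have hε2 : ε ≤ 1 - ∑ i' ∈ D1, xs i' j := (min_le_left _ _).trans (min_le_right _ _)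
  have hε3 : ε ≤ (β - β') / (w j + w j' + 1) := min_le_right _ _
  have hsep : β' + w j' * ε < β - w j * ε := by
    have h4 : ε * (w j + w j' + 1) ≤ β - β' := by
      rw [← le_div_iff₀ (by linarith)]
      exact hε3
    nlinarith
  set x' : D → S → ℝ := fun a b =>
    xs a b + (if a = i ∧ b = j then ε else 0) - (if a = i ∧ b = j' then ε else 0) with hx'def
  have hij' : (i, j') ∈ Ed := by
    by_contra hno
    exact absurd (hedge i j' hno) (ne_of_gt hpos)
  have hcolsum : ∀ b, ∑ a ∈ D1, x' a b =
      (∑ a ∈ D1, xs a b) + (if b = j then ε else 0) - (if b = j' then ε else 0) := by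
    intro b
    simp only [hx'def]
    rw [Finset.sum_sub_distrib, Finset.sum_add_distrib]
    congr 1
    · congr 1
      by_cases hb : b = j
      · subst hb; simp [Finset.sum_ite_eq', hi]
      · simp [hb]
    · by_cases hb : b = j'
      · subst hb; simp [Finset.sum_ite_eq', hi]
      · simp [hb]
  have hfeas : IsFracMatching Ed D1 Ssup x' := by
    refine ⟨?_, ?_, ?_, ?_⟩
    · intro a b
      have h0 := hnn a b
      simp only [hx'def]
      by_cases h1 : a = i ∧ b = j
      · have h2 : ¬(a = i ∧ b = j') := by
          rintro ⟨-, hb2⟩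
          exact hjj (hb2.symm.trans h1.2)
        rw [if_pos h1, if_neg h2]
        linarith
      · rw [if_neg h1]
        by_cases h2 : a = i ∧ b = j'
        · rw [if_pos h2]
          obtain ⟨ha, hb⟩ := h2
          subst ha; subst hb
          linarith
        · rw [if_neg h2]; linarith
    · intro a b hab
      have h0 := hedge a b hab
      have h1 : ¬(a = i ∧ b = j) := by
        rintro ⟨ha, hb⟩; subst ha; subst hb; exact hab hij
      have h2 : ¬(a = i ∧ b = j') := by
        rintro ⟨ha, hb⟩; subst ha; subst hb; exact hab hij'
      simp only [hx'def, if_neg h1, if_neg h2]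
      simp [h0]
    · intro a ha
      by_cases hai : a = i
      · subst hai
        have hs : ∑ b ∈ Ssup, x' a b = ∑ b ∈ Ssup, xs a b := by
          simp only [hx'def, true_and]
          rw [Finset.sum_sub_distrib, Finset.sum_add_distrib]
          simp [Finset.sum_ite_eq', hj, hj']
        rw [hs]; exact hrow a ha
      · have hs : ∑ b ∈ Ssup, x' a b = ∑ b ∈ Ssup, xs a b := by
          apply Finset.sum_congr rfl
          intro b _
          simp [hx'def, hai]
        rw [hs]; exact hrow a ha
    · intro b hb
      rw [hcolsum b]
      by_cases hbj : b = j
      · subst hbj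
        rw [if_pos rfl, if_neg hne']
        linarith
      · rw [if_neg hbj]
        by_cases hbj' : b = j'
        · subst hbj'
          rw [if_pos rfl]
          have := hcol b hb
          linarith
        · rw [if_neg hbj']
          have := hcol b hb
          linarith
  -- objective strictly decreases
  have hterm0 := slope_pair hg_conv hwj hwj' hε hsep
  have hpair : ({j, j'} : Finset S) ⊆ Ssup := by
    intro b hb
    rcases Finset.mem_insert.mp hb with h | h
    · subst h; exact hj
    · rw [Finset.mem_singleton] at h; subst h; exact hj'
  have hvan : ∀ b ∈ Ssup, b ∉ ({j, j'} : Finset S) →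
      ((1 / w b) * g (w b * (1 - ∑ a ∈ D1, x' a b))
        - (1 / w b) * g (w b * (1 - ∑ a ∈ D1, xs a b))) = 0 := by
    intro b _ hbn
    have hbj : b ≠ j := fun h => hbn (by simp [h])
    have hbj' : b ≠ j' := fun h => hbn (by simp [h])
    rw [hcolsum b, if_neg hbj, if_neg hbj']
    ring_nf
  have hdiff : PgObj g w D1 Ssup x' - PgObj g w D1 Ssup xs =
      ∑ b ∈ ({j, j'} : Finset S),
        ((1 / w b) * g (w b * (1 - ∑ a ∈ D1, x' a b))
          - (1 / w b) * g (w b * (1 - ∑ a ∈ D1, xs a b))) := by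
    rw [PgObj, PgObj, ← Finset.sum_sub_distrib]
    exact (Finset.sum_subset hpair hvan).symm
  have hterm : ∑ b ∈ ({j, j'} : Finset S),
      ((1 / w b) * g (w b * (1 - ∑ a ∈ D1, x' a b))
        - (1 / w b) * g (w b * (1 - ∑ a ∈ D1, xs a b))) < 0 := by
    rw [Finset.sum_pair hne']
    have harg1 : w j * (1 - ∑ a ∈ D1, x' a j) = β - w j * ε := by
      rw [hcolsum j, if_pos rfl, if_neg hne', hβ]
      ring
    have harg2 : w j * (1 - ∑ a ∈ D1, xs a j) = β := by rw [hβ]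
    have harg3 : w j' * (1 - ∑ a ∈ D1, x' a j') = β' + w j' * ε := by
      rw [hcolsum j', if_neg (fun h => hne' h.symm), if_pos rfl, hβ']
      ring
    have harg4 : w j' * (1 - ∑ a ∈ D1, xs a j') = β' := by rw [hβ']
    rw [harg1, harg2, harg3, harg4]
    linarith [hterm0]
  have hlt2 : PgObj g w D1 Ssup x' < PgObj g w D1 Ssup xs := by linarith [hdiff, hterm]
  exact absurd (hxs_opt x' hfeas) (not_le.mpr hlt2)

lemma main_ineq {D S : Type*} [DecidableEq D] [DecidableEq S]
    (D1 R : Finset D) (Ssup : Finset S) (hSne : Ssup.Nonempty)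
    (Ed : Finset (D × S)) (w : S → ℝ)
    (hw : ∀ j ∈ Ssup, 0 < w j)
    (g : ℝ → ℝ) (hg_mono : StrictMono g) (hg_conv : StrictConvexOn ℝ Set.univ g)
    (xs : D → S → ℝ) (hxs : IsFracMatching Ed D1 Ssup xs)
    (hxs_opt : ∀ x, IsFracMatching Ed D1 Ssup x → PgObj g w D1 Ssup xs ≤ PgObj g w D1 Ssup x)
    (Mstar : Finset (D × S)) (hMs : IsMatchingBtw Ed (D1 ∪ R) Ssup Mstar) :
    (Ssup.inf' hSne fun j => 1 - (∑ i ∈ D1, xs i j) + (∑ i ∈ D1, xs i j) ^ 2)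
        * (∑ e ∈ Mstar, w e.2)
      ≤ (∑ j ∈ Ssup, w j * (∑ i ∈ D1, xs i j))
        + ∑ j ∈ (Mstar.filter (fun e => e.1 ∉ D1)).image Prod.snd,
            w j * (1 - ∑ i ∈ D1, xs i j) := by
  classical
  set c := Ssup.inf' hSne fun j => 1 - (∑ i ∈ D1, xs i j) + (∑ i ∈ D1, xs i j) ^ 2 with hc
  set MD := Mstar.filter (fun e => e.1 ∈ D1) with hMD
  set MR := Mstar.filter (fun e => e.1 ∉ D1) with hMR
  set SD := MD.image Prod.snd with hSD
  set SR := MR.image Prod.snd with hSR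
  have hy0 : ∀ j, 0 ≤ ∑ i ∈ D1, xs i j := fun j => Finset.sum_nonneg fun i _ => hxs.1 i j
  have hy1 : ∀ j ∈ Ssup, ∑ i ∈ D1, xs i j ≤ 1 := hxs.2.2.2
  have hc_le : ∀ j ∈ Ssup, c ≤ 1 - (∑ i ∈ D1, xs i j) + (∑ i ∈ D1, xs i j) ^ 2 :=
    fun j hj => Finset.inf'_le _ hj
  have hβnn : ∀ j ∈ Ssup, 0 ≤ w j * (1 - ∑ i ∈ D1, xs i j) := fun j hj =>
    mul_nonneg (hw j hj).le (by linarith [hy1 j hj])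
  have hinj2 : ∀ a ∈ Mstar, ∀ b ∈ Mstar, a.2 = b.2 → a = b := by
    intro a ha b hb h2
    by_contra hne
    exact (hMs.1.2 a ha b hb hne).2 h2
  have hinj1 : ∀ a ∈ Mstar, ∀ b ∈ Mstar, a.1 = b.1 → a = b := by
    intro a ha b hb h1
    by_contra hne
    exact (hMs.1.2 a ha b hb hne).1 h1
  have hMDsub : MD ⊆ Mstar := Finset.filter_subset _ _
  have hMRsub : MR ⊆ Mstar := Finset.filter_subset _ _
  have hSD_sub : SD ⊆ Ssup := by
    intro j hj
    rw [hSD, Finset.mem_image] at hj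
    obtain ⟨e, he, rfl⟩ := hj
    exact (hMs.2 e (hMDsub he)).2
  have hSR_sub : SR ⊆ Ssup := by
    intro j hj
    rw [hSR, Finset.mem_image] at hj
    obtain ⟨e, he, rfl⟩ := hj
    exact (hMs.2 e (hMRsub he)).2
  have hSR_sub' : SR ⊆ Ssup \ SD := by
    intro j hj
    rw [Finset.mem_sdiff]
    refine ⟨hSR_sub hj, ?_⟩
    intro hjD
    rw [hSR, Finset.mem_image] at hj
    rw [hSD, Finset.mem_image] at hjD
    obtain ⟨e, he, hej⟩ := hj
    obtain ⟨e', he', hej'⟩ := hjD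
    have := hinj2 e (hMRsub he) e' (hMDsub he') (hej.trans hej'.symm)
    rw [hMR, Finset.mem_filter] at he
    rw [hMD, Finset.mem_filter] at he'
    exact he.2 (this ▸ he'.2)
  -- split the weight of Mstar
  have hsum_split : ∑ e ∈ Mstar, w e.2 = (∑ j ∈ SD, w j) + ∑ j ∈ SR, w j := by
    rw [hSD, hSR, Finset.sum_image (fun a ha b hb h => hinj2 a (hMDsub ha) b (hMDsub hb) h),
      Finset.sum_image (fun a ha b hb h => hinj2 a (hMRsub ha) b (hMRsub hb) h),
      hMD, hMR]
    exact (Finset.sum_filter_add_sum_filter_not _ _ _).symm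
  -- the per-edge charging inequality
  have hqe : ∀ e ∈ MD,
      w e.2 * (1 - ∑ i ∈ D1, xs i e.2) * (1 - ∑ i ∈ D1, xs i e.2)
        ≤ (∑ j' ∈ Ssup, w j' * (1 - ∑ i ∈ D1, xs i j') * xs e.1 j')
          - w e.2 * (1 - ∑ i ∈ D1, xs i e.2) * (∑ i ∈ D1, xs i e.2) := by
    intro e he
    have heM : e ∈ Mstar := hMDsub he
    have hi : e.1 ∈ D1 := by
      rw [hMD, Finset.mem_filter] at he
      exact he.2
    have hj2 : e.2 ∈ Ssup := (hMs.2 e heM).2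
    have hej : (e.1, e.2) ∈ Ed := by
      have := hMs.1.1 heM
      simpa using this
    have hterm : ∀ j' ∈ Ssup,
        w e.2 * (1 - ∑ i ∈ D1, xs i e.2) * xs e.1 j'
          ≤ w j' * (1 - ∑ i ∈ D1, xs i j') * xs e.1 j' := by
      intro j' hj'
      rcases eq_or_lt_of_le (hxs.1 e.1 j') with h0 | h0
      · rw [← h0, mul_zero, mul_zero]
      · exact mul_le_mul_of_nonneg_right
          (beta_mono D1 Ssup Ed w hw g hg_conv xs hxs hxs_opt hi hj2 hj' hej h0)
          (hxs.1 e.1 j')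
    by_cases hylt : ∑ i ∈ D1, xs i e.2 < 1
    · have hsat := row_saturated D1 Ssup Ed w hw g hg_mono xs hxs hxs_opt hi hj2 hej hylt
      have expand : w e.2 * (1 - ∑ i ∈ D1, xs i e.2) * (1 - ∑ i ∈ D1, xs i e.2)
          = (∑ j' ∈ Ssup, w e.2 * (1 - ∑ i ∈ D1, xs i e.2) * xs e.1 j')
            - w e.2 * (1 - ∑ i ∈ D1, xs i e.2) * (∑ i ∈ D1, xs i e.2) := by
        rw [← Finset.mul_sum, hsat]
        ring
      rw [expand]
      have := Finset.sum_le_sum hterm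
      linarith
    · have hyeq : ∑ i ∈ D1, xs i e.2 = 1 := le_antisymm (hy1 _ hj2) (not_lt.mp hylt)
      rw [hyeq]
      have hs : 0 ≤ ∑ j' ∈ Ssup, w j' * (1 - ∑ i ∈ D1, xs i j') * xs e.1 j' :=
        Finset.sum_nonneg fun j' hj' => mul_nonneg (hβnn j' hj') (hxs.1 e.1 j')
      nlinarith [hs]
  -- summed charging inequality
  have hcharge : ∑ e ∈ MD, w e.2 * (1 - ∑ i ∈ D1, xs i e.2) * (1 - ∑ i ∈ D1, xs i e.2)
      ≤ ∑ j ∈ Ssup \ SD, w j * (1 - ∑ i ∈ D1, xs i j) * (∑ i ∈ D1, xs i j) := by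
    have h1 := Finset.sum_le_sum hqe
    rw [Finset.sum_sub_distrib] at h1
    have h2 : ∑ e ∈ MD, ∑ j' ∈ Ssup, w j' * (1 - ∑ i ∈ D1, xs i j') * xs e.1 j'
        ≤ ∑ j' ∈ Ssup, w j' * (1 - ∑ i ∈ D1, xs i j') * (∑ i ∈ D1, xs i j') := by
      rw [Finset.sum_comm]
      apply Finset.sum_le_sum
      intro j' hj'
      have hx : ∑ e ∈ MD, xs e.1 j' ≤ ∑ i ∈ D1, xs i j' := by
        have himg := Finset.sum_image (s := MD) (g := Prod.fst) (f := fun i => xs i j')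
          (fun a ha b hb h => hinj1 a (hMDsub ha) b (hMDsub hb) h)
        rw [← himg]
        apply Finset.sum_le_sum_of_subset_of_nonneg
        · intro i hi
          rw [Finset.mem_image] at hi
          obtain ⟨e, he, rfl⟩ := hi
          rw [hMD, Finset.mem_filter] at he
          exact he.2
        · intro i _ _
          exact hxs.1 i j'
      calc ∑ e ∈ MD, w j' * (1 - ∑ i ∈ D1, xs i j') * xs e.1 j'
          = w j' * (1 - ∑ i ∈ D1, xs i j') * ∑ e ∈ MD, xs e.1 j' := by
            rw [Finset.mul_sum]
        _ ≤ w j' * (1 - ∑ i ∈ D1, xs i j') * (∑ i ∈ D1, xs i j') :=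
            mul_le_mul_of_nonneg_left hx (hβnn j' hj')
    have h3 : ∑ e ∈ MD, w e.2 * (1 - ∑ i ∈ D1, xs i e.2) * (∑ i ∈ D1, xs i e.2)
        = ∑ j ∈ SD, w j * (1 - ∑ i ∈ D1, xs i j) * (∑ i ∈ D1, xs i j) := by
      rw [hSD, Finset.sum_image (fun a ha b hb h => hinj2 a (hMDsub ha) b (hMDsub hb) h)]
    have h4 : ∑ j ∈ Ssup \ SD, w j * (1 - ∑ i ∈ D1, xs i j) * (∑ i ∈ D1, xs i j)
        = (∑ j ∈ Ssup, w j * (1 - ∑ i ∈ D1, xs i j) * (∑ i ∈ D1, xs i j))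
          - ∑ j ∈ SD, w j * (1 - ∑ i ∈ D1, xs i j) * (∑ i ∈ D1, xs i j) := by
      rw [eq_sub_iff_add_eq, Finset.sum_sdiff hSD_sub]
    linarith
  -- pointwise bounds on c
  have f1 : c * ∑ j ∈ SD, w j
      ≤ (∑ j ∈ SD, w j * (∑ i ∈ D1, xs i j))
        + ∑ j ∈ SD, w j * (1 - ∑ i ∈ D1, xs i j) * (1 - ∑ i ∈ D1, xs i j) := by
    rw [Finset.mul_sum, ← Finset.sum_add_distrib]
    apply Finset.sum_le_sum
    intro j hj
    have hjS : j ∈ Ssup := hSD_sub hj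
    have h5 := hc_le j hjS
    have hwj := hw j hjS
    nlinarith [h5, hwj]
  have f2 : c * ∑ j ∈ SR, w j
      ≤ (∑ j ∈ SR, w j * (1 - ∑ i ∈ D1, xs i j))
        + ∑ j ∈ SR, w j * (∑ i ∈ D1, xs i j) * (∑ i ∈ D1, xs i j) := by
    rw [Finset.mul_sum, ← Finset.sum_add_distrib]
    apply Finset.sum_le_sum
    intro j hj
    have hjS : j ∈ Ssup := hSR_sub hj
    have h5 := hc_le j hjS
    have hwj := hw j hjS
    nlinarith [h5, hwj]
  -- transfer hcharge sum over MD to sum over SD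
  have hchargeSD : ∑ j ∈ SD, w j * (1 - ∑ i ∈ D1, xs i j) * (1 - ∑ i ∈ D1, xs i j)
      ≤ ∑ j ∈ Ssup \ SD, w j * (1 - ∑ i ∈ D1, xs i j) * (∑ i ∈ D1, xs i j) := by
    rw [hSD, Finset.sum_image (fun a ha b hb h => hinj2 a (hMDsub ha) b (hMDsub hb) h)]
    exact hcharge
  -- algebraic identities
  have g1 : (∑ j ∈ Ssup, w j * (∑ i ∈ D1, xs i j))
      = (∑ j ∈ Ssup \ SD, w j * (∑ i ∈ D1, xs i j))
        + ∑ j ∈ SD, w j * (∑ i ∈ D1, xs i j) :=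
    (Finset.sum_sdiff hSD_sub).symm
  have g2 : ∑ j ∈ Ssup \ SD, w j * (1 - ∑ i ∈ D1, xs i j) * (∑ i ∈ D1, xs i j)
      = (∑ j ∈ Ssup \ SD, w j * (∑ i ∈ D1, xs i j))
        - ∑ j ∈ Ssup \ SD, w j * (∑ i ∈ D1, xs i j) * (∑ i ∈ D1, xs i j) := by
    rw [← Finset.sum_sub_distrib]
    apply Finset.sum_congr rfl
    intro j _
    ring
  have g3 : ∑ j ∈ SR, w j * (∑ i ∈ D1, xs i j) * (∑ i ∈ D1, xs i j)
      ≤ ∑ j ∈ Ssup \ SD, w j * (∑ i ∈ D1, xs i j) * (∑ i ∈ D1, xs i j) := by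
    apply Finset.sum_le_sum_of_subset_of_nonneg hSR_sub'
    intro j hj _
    have hjS : j ∈ Ssup := (Finset.mem_sdiff.mp hj).1
    exact mul_nonneg (mul_nonneg (hw j hjS).le (hy0 j)) (hy0 j)
  rw [hsum_split, mul_add]
  linarith [f1, f2, hchargeSD, g1, g2, g3]

/-- **Refined competitive ratio of Algorithm 1.**
With `y*_j := Σ_i x*_{ij}`, for every realization `R ⊆ D2`,
`E_{M1∼μ}[ Σ_{j∈V_S(M1)} w_j + maxWM(R, S∖V_S(M1)) ]
  ≥ (min_{j∈S} (1 − y*_j + (y*_j)²))·maxWM(D1∪R, S)`. -/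
theorem refined_competitive_ratio
    {D S : Type*} [DecidableEq D] [DecidableEq S]
    (D1 D2 : Finset D) (Ssup : Finset S) (hSne : Ssup.Nonempty)
    (Ed : Finset (D × S)) (w : S → ℝ)
    (hdisj : Disjoint D1 D2)
    (hE : ∀ e ∈ Ed, e.1 ∈ D1 ∪ D2 ∧ e.2 ∈ Ssup)
    (hw : ∀ j ∈ Ssup, 0 < w j)
    (g : ℝ → ℝ)
    (hg_diff : Differentiable ℝ g)
    (hg_mono : StrictMono g)
    (hg_conv : StrictConvexOn ℝ Set.univ g)
    (xs : D → S → ℝ)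
    (hxs : IsFracMatching Ed D1 Ssup xs)
    (hxs_opt : ∀ x, IsFracMatching Ed D1 Ssup x →
      PgObj g w D1 Ssup xs ≤ PgObj g w D1 Ssup x)
    (μ : Finset (D × S) → ℝ)
    (hμ_nonneg : ∀ M, 0 ≤ μ M)
    (hμ_supp : ∀ M, μ M ≠ 0 → IsMatchingBtw Ed D1 Ssup M)
    (hμ_total : ∑ M ∈ Ed.powerset, μ M = 1)
    (hμ_marg : ∀ i ∈ D1, ∀ j ∈ Ssup,
      ∑ M ∈ Ed.powerset.filter (fun M => (i, j) ∈ M), μ M = xs i j)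
    (R : Finset D) (hR : R ⊆ D2) :
    ∑ M ∈ Ed.powerset, μ M *
        ((∑ j ∈ suppliesOf M, w j) + maxWM w Ed R (Ssup \ suppliesOf M)) ≥
      (Ssup.inf' hSne fun j =>
          1 - (∑ i ∈ D1, xs i j) + (∑ i ∈ D1, xs i j) ^ 2) *
        maxWM w Ed (D1 ∪ R) Ssup := by
  classical
  set c := Ssup.inf' hSne fun j => 1 - (∑ i ∈ D1, xs i j) + (∑ i ∈ D1, xs i j) ^ 2 with hc
  have hc_pos : 0 < c := by
    rw [hc]
    have h34 : (0:ℝ) < 3/4 := by norm_num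
    apply lt_of_lt_of_le h34
    apply Finset.le_inf'
    intro j _
    nlinarith [sq_nonneg ((∑ i ∈ D1, xs i j) - 1/2)]
  -- marginal probability of j being matched equals y j
  have hPj : ∀ j ∈ Ssup, ∑ M ∈ Ed.powerset, μ M * (if j ∈ suppliesOf M then (1:ℝ) else 0)
      = ∑ i ∈ D1, xs i j := by
    intro j hj
    have step1 : ∀ M ∈ Ed.powerset, μ M * (if j ∈ suppliesOf M then (1:ℝ) else 0)
        = ∑ i ∈ D1, μ M * (if (i, j) ∈ M then (1:ℝ) else 0) := by
      intro M _
      by_cases hμ0 : μ M = 0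
      · simp [hμ0]
      · obtain ⟨⟨hMEd, hmatch⟩, hbnd⟩ := hμ_supp M hμ0
        rw [← Finset.mul_sum]
        congr 1
        by_cases hjs : j ∈ suppliesOf M
        · rw [if_pos hjs]
          rw [suppliesOf, Finset.mem_image] at hjs
          obtain ⟨e, he, hej⟩ := hjs
          have he1 : e.1 ∈ D1 := (hbnd e he).1
          have heM : (e.1, j) ∈ M := by
            have hh : (e.1, j) = e := by rw [← hej]
            rw [hh]; exact he
          symm
          rw [Finset.sum_eq_single_of_mem e.1 he1 (fun i _ hine => ?_), if_pos heM]
          have hnm : (i, j) ∉ M := by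
            intro hmem
            have hne2 : (i, j) ≠ e := fun hEq => hine (by rw [← hEq])
            exact (hmatch (i, j) hmem e he hne2).2 hej.symm
          rw [if_neg hnm]
        · rw [if_neg hjs]
          symm
          apply Finset.sum_eq_zero
          intro i _
          have hnm : (i, j) ∉ M := fun hmem =>
            hjs (Finset.mem_image_of_mem Prod.snd hmem)
          rw [if_neg hnm]
    rw [Finset.sum_congr rfl step1, Finset.sum_comm]
    apply Finset.sum_congr rfl
    intro i hi
    rw [← hμ_marg i hi j hj, Finset.sum_filter]
    apply Finset.sum_congr rfl
    intro M _
    by_cases h : (i, j) ∈ M <;> simp [h]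
  -- bound for an arbitrary offline matching
  have hbound : ∀ Mstar, IsMatchingBtw Ed (D1 ∪ R) Ssup Mstar →
      c * (∑ e ∈ Mstar, w e.2) ≤ ∑ M ∈ Ed.powerset, μ M *
        ((∑ j ∈ suppliesOf M, w j) + maxWM w Ed R (Ssup \ suppliesOf M)) := by
    intro Mstar hMs
    set MR := Mstar.filter (fun e => e.1 ∉ D1) with hMR
    set SR := MR.image Prod.snd with hSRd
    have hinj2 : ∀ a ∈ Mstar, ∀ b ∈ Mstar, a.2 = b.2 → a = b := by
      intro a ha b hb h2
      by_contra hne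
      exact (hMs.1.2 a ha b hb hne).2 h2
    have hMRsub : MR ⊆ Mstar := Finset.filter_subset _ _
    have hSR_sub : SR ⊆ Ssup := by
      intro j hj
      rw [hSRd, Finset.mem_image] at hj
      obtain ⟨e, he, rfl⟩ := hj
      exact (hMs.2 e (hMRsub he)).2
    -- second stage bound
    have hstage2 : ∀ M : Finset (D × S),
        (∑ j ∈ SR \ suppliesOf M, w j) ≤ maxWM w Ed R (Ssup \ suppliesOf M) := by
      intro M
      set N := MR.filter (fun e => e.2 ∉ suppliesOf M) with hN
      have hNsub : N ⊆ Mstar := (Finset.filter_subset _ _).trans hMRsub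
      have hNmatch : IsMatchingBtw Ed R (Ssup \ suppliesOf M) N := by
        refine ⟨⟨hNsub.trans hMs.1.1,
          fun e he e' he' hne => hMs.1.2 e (hNsub he) e' (hNsub he') hne⟩, ?_⟩
        intro e he
        have heMR : e ∈ MR := Finset.mem_of_mem_filter e he
        have heMs : e ∈ Mstar := hMRsub heMR
        constructor
        · rcases Finset.mem_union.mp (hMs.2 e heMs).1 with h | h
          · exact absurd h (Finset.mem_filter.mp heMR).2
          · exact h
        · rw [Finset.mem_sdiff]
          exact ⟨(hMs.2 e heMs).2, (Finset.mem_filter.mp he).2⟩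
      have himg : N.image Prod.snd = SR \ suppliesOf M := by
        ext j
        simp only [hN, hSRd, hMR, Finset.mem_image, Finset.mem_sdiff, Finset.mem_filter]
        constructor
        · rintro ⟨e, ⟨⟨heM, h1⟩, h2⟩, rfl⟩
          exact ⟨⟨e, ⟨heM, h1⟩, rfl⟩, h2⟩
        · rintro ⟨⟨e, ⟨heM, h1⟩, rfl⟩, h2⟩
          exact ⟨e, ⟨⟨heM, h1⟩, h2⟩, rfl⟩
      have hsum : ∑ j ∈ SR \ suppliesOf M, w j = ∑ e ∈ N, w e.2 := by
        rw [← himg]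
        exact Finset.sum_image (fun a ha b hb h => hinj2 a (hNsub ha) b (hNsub hb) h)
      rw [hsum]
      exact le_maxWM w Ed R (Ssup \ suppliesOf M) hNmatch
    have hE1 : ∑ M ∈ Ed.powerset, μ M * ((∑ j ∈ suppliesOf M, w j) + ∑ j ∈ SR \ suppliesOf M, w j)
        ≤ ∑ M ∈ Ed.powerset, μ M *
          ((∑ j ∈ suppliesOf M, w j) + maxWM w Ed R (Ssup \ suppliesOf M)) :=
      Finset.sum_le_sum fun M _ =>
        mul_le_mul_of_nonneg_left (add_le_add (le_refl _) (hstage2 M)) (hμ_nonneg M)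
    have hval : ∑ M ∈ Ed.powerset, μ M * ((∑ j ∈ suppliesOf M, w j) + ∑ j ∈ SR \ suppliesOf M, w j)
        = (∑ j ∈ Ssup, w j * (∑ i ∈ D1, xs i j))
          + ∑ j ∈ SR, w j * (1 - ∑ i ∈ D1, xs i j) := by
      have hrw : ∀ M ∈ Ed.powerset,
          μ M * ((∑ j ∈ suppliesOf M, w j) + ∑ j ∈ SR \ suppliesOf M, w j)
          = (∑ j ∈ Ssup, w j * (μ M * (if j ∈ suppliesOf M then 1 else 0)))
            + ∑ j ∈ SR, (w j * μ M - w j * (μ M * (if j ∈ suppliesOf M then 1 else 0))) := by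
        intro M _
        by_cases hμ0 : μ M = 0
        · simp [hμ0]
        · have hsub : suppliesOf M ⊆ Ssup := by
            intro j hj
            rw [suppliesOf, Finset.mem_image] at hj
            obtain ⟨e, he, rfl⟩ := hj
            exact ((hμ_supp M hμ0).2 e he).2
          have h1 : ∑ j ∈ suppliesOf M, w j
              = ∑ j ∈ Ssup, w j * (if j ∈ suppliesOf M then 1 else 0) := by
            rw [← Finset.sum_subset hsub (fun x _ hx => by simp [hx])]
            apply Finset.sum_congr rfl
            intro j hj
            simp [hj]
          have h2 : ∑ j ∈ SR \ suppliesOf M, w j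
              = ∑ j ∈ SR, (w j - w j * (if j ∈ suppliesOf M then 1 else 0)) := by
            rw [Finset.sdiff_eq_filter, Finset.sum_filter]
            apply Finset.sum_congr rfl
            intro j _
            by_cases h : j ∈ suppliesOf M <;> simp [h]
          rw [h1, h2, mul_add, Finset.mul_sum, Finset.mul_sum]
          congr 1
          · apply Finset.sum_congr rfl; intro j _; ring
          · apply Finset.sum_congr rfl; intro j _; ring
      rw [Finset.sum_congr rfl hrw, Finset.sum_add_distrib]
      congr 1
      · rw [Finset.sum_comm]
        apply Finset.sum_congr rfl
        intro j hj
        rw [← Finset.mul_sum, hPj j hj]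
      · rw [Finset.sum_comm]
        apply Finset.sum_congr rfl
        intro j hj
        rw [Finset.sum_sub_distrib, ← Finset.mul_sum, ← Finset.mul_sum, hμ_total,
          hPj j (hSR_sub hj)]
        ring
    have hmain := main_ineq D1 R Ssup hSne Ed w hw g hg_mono hg_conv xs hxs hxs_opt Mstar hMs
    rw [← hMR, ← hSRd, ← hc] at hmain
    linarith [hmain, hE1, hval]
  rw [ge_iff_le]
  have hmax : maxWM w Ed (D1 ∪ R) Ssup ≤ (∑ M ∈ Ed.powerset, μ M *
      ((∑ j ∈ suppliesOf M, w j) + maxWM w Ed R (Ssup \ suppliesOf M))) / c := by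
    apply maxWM_le
    intro M hM
    rw [le_div_iff₀ hc_pos]
    calc (∑ e ∈ M, w e.2) * c = c * ∑ e ∈ M, w e.2 := mul_comm _ _
      _ ≤ _ := hbound M hM
  calc c * maxWM w Ed (D1 ∪ R) Ssup
      ≤ c * ((∑ M ∈ Ed.powerset, μ M *
          ((∑ j ∈ suppliesOf M, w j) + maxWM w Ed R (Ssup \ suppliesOf M))) / c) :=
        mul_le_mul_of_nonneg_left hmax hc_pos.le
    _ = _ := by field_simp
end

section
/- Let X be a set, f: X → ℝ a function, and X1 ⊆ X2 ⊆ X subsets such that the minima γ1 := min_{x∈X1} f(x) and γ2 := min_{x∈X2} f(x) are attained. Suppose there exists a mapping φ: X2 → X1 such that for every x ∈ X2 at least one of the following holds: (1) there exists γ† < γ1 such that f(x) ≤ f(φ(x)) ≤ γ† or γ† ≤ f(φ(x)) ≤ f(x); or (2) there exists γ‡ > γ1 such that f(φ(x)) ≤ f(x) ≤ γ‡ or γ‡ ≤ f(x) ≤ f(φ(x)). Then γ1 = γ2. -/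
/-- **Lemma F.1 (program restriction).**
Let `X1 ⊆ X2 ⊆ X`, `f : X → ℝ`, with attained minima `γ1` over `X1` and `γ2` over `X2`.
If there is a map `φ : X2 → X1` such that every `x ∈ X2` satisfies, for some `γ† < γ1`,
`f(x) ≤ f(φ(x)) ≤ γ†` or `γ† ≤ f(φ(x)) ≤ f(x)`, or, for some `γ‡ > γ1`,
`f(φ(x)) ≤ f(x) ≤ γ‡` or `γ‡ ≤ f(x) ≤ f(φ(x))`, then `γ1 = γ2`. -/
theorem program_restriction
    {X : Type*} (f : X → ℝ) (X1 X2 : Set X) (h12 : X1 ⊆ X2)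
    (γ1 γ2 : ℝ)
    (hγ1 : IsLeast (f '' X1) γ1)
    (hγ2 : IsLeast (f '' X2) γ2)
    (φ : X → X) (hφ : ∀ x ∈ X2, φ x ∈ X1)
    (hcase : ∀ x ∈ X2,
      (∃ γd, γd < γ1 ∧
        ((f x ≤ f (φ x) ∧ f (φ x) ≤ γd) ∨ (γd ≤ f (φ x) ∧ f (φ x) ≤ f x))) ∨
      (∃ γdd, γ1 < γdd ∧
        ((f (φ x) ≤ f x ∧ f x ≤ γdd) ∨ (γdd ≤ f x ∧ f x ≤ f (φ x))))) :
    γ1 = γ2 := by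
  have key : ∀ x ∈ X2, γ1 ≤ f x := by
    intro x hx
    have hφx : γ1 ≤ f (φ x) := hγ1.2 ⟨φ x, hφ x hx, rfl⟩
    rcases hcase x hx with ⟨γd, hγd, h | h⟩ | ⟨γdd, hγdd, h | h⟩
    · linarith [h.1, h.2]
    · linarith [h.2]
    · linarith [h.1]
    · linarith [h.1]
  apply le_antisymm
  · obtain ⟨x, hx, hfx⟩ := hγ2.1
    exact hfx ▸ key x hx
  · obtain ⟨x, hx, hfx⟩ := hγ1.1
    exact hγ2.2 ⟨x, h12 hx, hfx⟩
end

section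
/- (Invariant of the discarding procedure / online contention resolution.) Let n ∈ ℕ and x_1, …, x_n ∈ [0,1] with Σ_{k=1}^n x_k ≤ 1. Set θ_0 := 0 and θ_k := Σ_{i=1}^k x_i, and define p_0 := 1 and p_k := p_{k−1}·(1 − x_k/(2 − θ_{k−1})) for 1 ≤ k ≤ n. Then p_k = 1 − θ_k/2 for all 0 ≤ k ≤ n, and consequently p_{k−1}·x_k/(2 − θ_{k−1}) = x_k/2 for all 1 ≤ k ≤ n. -/
/-! The invariant is the algebraic identity `(1 - θ/2) · (1 - x/(2 - θ)) = 1 - (θ + x)/2`, valid as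
soon as `θ ≠ 2`, since `1 - θ/2 = (2 - θ)/2`: the survival probability `1 - θ/2` cancels the
denominator of the finalisation probability `1/(2 - θ)`. The constraint `Σ x_k ≤ 1` with
`x_k ≥ 0` keeps every prefix sum `θ_k` at most `1`, hence away from `2`. -/

open Finset

lemma one_sub_half_mul_div_two_sub {t : ℝ} (ht : t ≠ 2) (a : ℝ) :
    (1 - t / 2) * (a / (2 - t)) = a / 2 := by
  have : 2 - t ≠ 0 := sub_ne_zero.mpr ht.symm
  field_simp

lemma one_sub_half_mul_one_sub_div_two_sub {t : ℝ} (ht : t ≠ 2) (a : ℝ) :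
    (1 - t / 2) * (1 - a / (2 - t)) = 1 - (t + a) / 2 := by
  rw [mul_one_sub, one_sub_half_mul_div_two_sub ht]
  ring

lemma eq_one_sub_half_of_recurrence {n : ℕ} {x θ p : ℕ → ℝ} (hθ0 : θ 0 = 0)
    (hθ_succ : ∀ k, θ (k + 1) = θ k + x (k + 1)) (hθ_ne : ∀ k < n, θ k ≠ 2) (hp0 : p 0 = 1)
    (hp : ∀ k < n, p (k + 1) = p k * (1 - x (k + 1) / (2 - θ k))) :
    ∀ k ≤ n, p k = 1 - θ k / 2 := by
  intro k hk
  induction k with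
  | zero => simp [hp0, hθ0]
  | succ k ih =>
    rw [hp k hk, ih (by omega), one_sub_half_mul_one_sub_div_two_sub (hθ_ne k hk), hθ_succ]

lemma sum_Icc_one_le_of_nonneg {x : ℕ → ℝ} {k n : ℕ} (hx : ∀ i, 1 ≤ i → i ≤ n → 0 ≤ x i)
    (hk : k ≤ n) : ∑ i ∈ Icc 1 k, x i ≤ ∑ i ∈ Icc 1 n, x i :=
  sum_le_sum_of_subset_of_nonneg (Icc_subset_Icc_right hk) fun i hi _ =>
    hx i (mem_Icc.mp hi).1 (mem_Icc.mp hi).2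

/-- **Invariant of the discarding procedure (online contention resolution).**
Let `x_1, …, x_n ∈ [0,1]` with `Σ x_k ≤ 1`, `θ_k := Σ_{i=1}^k x_i`, `p_0 := 1` and
`p_k := p_{k−1}·(1 − x_k/(2 − θ_{k−1}))`.  Then `p_k = 1 − θ_k/2` for all `k ≤ n`, and
consequently `p_{k−1}·x_k/(2 − θ_{k−1}) = x_k/2` for all `1 ≤ k ≤ n`. -/
theorem discarding_invariant
    (n : ℕ) (x : ℕ → ℝ)
    (hx : ∀ k, 1 ≤ k → k ≤ n → x k ∈ Set.Icc (0 : ℝ) 1)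
    (hsum : ∑ k ∈ Finset.Icc 1 n, x k ≤ 1)
    (θ : ℕ → ℝ) (hθ : ∀ k, θ k = ∑ i ∈ Finset.Icc 1 k, x i)
    (p : ℕ → ℝ) (hp0 : p 0 = 1)
    (hp : ∀ k, 1 ≤ k → k ≤ n → p k = p (k - 1) * (1 - x k / (2 - θ (k - 1)))) :
    (∀ k ≤ n, p k = 1 - θ k / 2) ∧
      ∀ k, 1 ≤ k → k ≤ n → p (k - 1) * (x k / (2 - θ (k - 1))) = x k / 2 := by
  have hθ_ne : ∀ k ≤ n, θ k ≠ 2 := fun k hk => by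
    have := (hθ k).trans_le (sum_Icc_one_le_of_nonneg (fun i hi hin => (hx i hi hin).1) hk)
    linarith
  have hθ_succ : ∀ k, θ (k + 1) = θ k + x (k + 1) := fun k => by
    rw [hθ, hθ, sum_Icc_succ_top (Nat.le_add_left 1 k)]
  have invariant : ∀ k ≤ n, p k = 1 - θ k / 2 :=
    eq_one_sub_half_of_recurrence (by simp [hθ]) hθ_succ (fun k hk => hθ_ne k hk.le) hp0
      fun k hk => hp (k + 1) (Nat.le_add_left 1 k) hk
  refine ⟨invariant, fun k hk1 hkn => ?_⟩
  rw [invariant (k - 1) (by omega)]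
  exact one_sub_half_mul_div_two_sub (hθ_ne (k - 1) (by omega)) (x k)
end
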